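/- arXiv:2503.02830 — 14 statements merged into one kernel-verified Lean document; each statement's English description precedes it below -/
import Mathlib

section
/- Let R be a Noetherian ring, P a prime ideal, and M a finitely generated R-module killed by a power of P. Then there exists g ∈ R ∖ P such that the localization M_g is free filterable relative to P·R_g over R_g. -/
/-!
Let `Q j = P ^ j • M`, a finite descending filtration of `M` with `Q k = 0`. Each subquotient
`Q j / Q (j + 1)` is a finitely generated module over the domain `R ⧸ P`, so it contains a
linearly independent family spanning it up to a nonzero scalar `c j`. Inverting a lift `g ∉ P`
of `∏ c j` makes each localized subquotient free over `R_g ⧸ P R_g`, and since localization is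
exact the localized subquotients are the subquotients of the localized filtration `(Q j)_g`,
which read backwards is the required chain in `M_g`.
-/

universe u v

/-- `M` is free filterable relative to the ideal `P`: an ascending chain of
finitely generated submodules starting at `0` with union `M` whose successive
factors are free `R⧸P`-modules. -/
def FreeFilterable (R : Type u) [CommRing R] (P : Ideal R)
    (M : Type v) [AddCommGroup M] [Module R M] : Prop :=
  ∃ F : ℕ → Submodule R M,
    F 0 = ⊥ ∧
    (∀ n, F n ≤ F (n + 1)) ∧
    (∀ n, (F n).FG) ∧
    (⨆ n, F n) = ⊤ ∧
    ∀ n, ∃ ι : Type v,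
      Nonempty ((↥(F (n + 1)) ⧸ Submodule.comap (F (n + 1)).subtype (F n))
        ≃ₗ[R] (ι →₀ R ⧸ P))

open Submodule

section Domain

variable {A : Type*} [CommRing A] [IsDomain A]

theorem exists_linearIndepOn_smul_mem_span {W : Type*} [AddCommGroup W] [Module A W]
    [Module.Finite A W] :
    ∃ c : A, c ≠ 0 ∧ ∃ I : Set W, LinearIndepOn A id I ∧
      ∀ v : W, c • v ∈ span A I := by
  classical
  obtain ⟨s, hs⟩ := Module.Finite.fg_top (R := A) (M := W)
  obtain ⟨J, hJ, hmax⟩ := exists_maximal_linearIndepOn A ((↑) : s → W)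
  have htors (x : s) :
      ∃ a : A, a ≠ 0 ∧ a • (x : W) ∈ span A (((↑) : s → W) '' J) := by
    by_cases hx : x ∈ J
    · exact ⟨1, one_ne_zero, by simpa using subset_span (Set.mem_image_of_mem _ hx)⟩
    · exact hmax x hx
  choose a ha0 ha using htors
  refine ⟨∏ x, a x, Finset.prod_ne_zero_iff.mpr fun x _ => ha0 x, _, hJ.id_image, fun v => ?_⟩
  have hgen : span A (s : Set W) ≤
      (span A (((↑) : s → W) '' J)).comap (LinearMap.lsmul A W (∏ x, a x)) := by
    refine span_le.mpr fun x hx => ?_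
    obtain ⟨d, hd⟩ := Finset.dvd_prod_of_mem a (Finset.mem_univ ⟨x, hx⟩)
    rw [SetLike.mem_coe, mem_comap, LinearMap.lsmul_apply, hd, mul_comm, mul_smul]
    exact smul_mem _ d (ha ⟨x, hx⟩)
  exact hgen (hs ▸ mem_top)

theorem exists_linearIndepOn_smul_mem_span_of_forall_lt (k : ℕ) (W : ℕ → Type*)
    [∀ j, AddCommGroup (W j)] [∀ j, Module A (W j)] [∀ j, Module.Finite A (W j)] :
    ∃ c : A, c ≠ 0 ∧ ∀ j < k, ∃ I : Set (W j), LinearIndepOn A id I ∧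
      ∀ v : W j, c • v ∈ span A I := by
  choose c hc I hI hspan using fun j => exists_linearIndepOn_smul_mem_span (A := A) (W := W j)
  refine ⟨∏ j ∈ Finset.range k, c j, Finset.prod_ne_zero_iff.mpr fun j _ => hc j,
    fun j hj => ⟨I j, hI j, fun v => ?_⟩⟩
  obtain ⟨d, hd⟩ := Finset.dvd_prod_of_mem c (Finset.mem_range.mpr hj)
  rw [hd, mul_comm, mul_smul]
  exact smul_mem _ d (hspan j v)

end Domain

theorem IsLocalizedModule.nonempty_linearEquiv_finsupp_quotient {R : Type*} [CommRing R]
    {P : Ideal R} {W : Type*} [AddCommGroup W] [Module R W] [Module (R ⧸ P) W]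
    [IsScalarTower R (R ⧸ P) W] (p : Submonoid R) {g : R} (hg : g ∈ p) {I : Set W}
    (hI : LinearIndepOn (R ⧸ P) id I)
    (hspan : ∀ v : W, Ideal.Quotient.mk P g • v ∈ span (R ⧸ P) I)
    (A : Type*) [CommRing A] [Algebra R A] [IsLocalization p A]
    {W' : Type*} [AddCommGroup W'] [Module R W'] [Module A W'] [IsScalarTower R A W']
    (f : W →ₗ[R] W') [IsLocalizedModule p f] :
    Nonempty (W' ≃ₗ[A] (I →₀ A ⧸ P.map (algebraMap R A))) := by
  let ℓ := Finsupp.mapRange.linearMap (α := I)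
    (IsScalarTower.toAlgHom R (R ⧸ P) (A ⧸ P.map (algebraMap R A))).toLinearMap
  let φ : (I →₀ R ⧸ P) →ₗ[R] W :=
    (Finsupp.linearCombination (R ⧸ P) (↑)).restrictScalars R
  let Φ := IsLocalizedModule.map p ℓ f φ
  have hsurj : Function.Surjective Φ := by
    intro y
    obtain ⟨⟨w, s⟩, rfl⟩ := IsLocalizedModule.mk'_surjective p f y
    obtain ⟨x, hx⟩ : g • w ∈ LinearMap.range φ := by
      rw [LinearMap.range_restrictScalars, Finsupp.range_linearCombination, Subtype.range_coe,
        algebra_compatible_smul (R ⧸ P)]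
      exact hspan w
    refine ⟨IsLocalizedModule.mk' ℓ x (⟨g, hg⟩ * s), ?_⟩
    rw [IsLocalizedModule.map_mk', hx, ← Submonoid.mk_smul g hg,
      IsLocalizedModule.mk'_cancel_left]
    rfl
  have hinj : Function.Injective Φ := IsLocalizedModule.map_injective p ℓ f φ hI
  exact ⟨(LinearEquiv.ofBijective Φ ⟨hinj, hsurj⟩).symm.extendScalarsOfIsLocalization p A⟩

namespace Submodule

theorem isTorsionBySet_subquotient {R M : Type*} [CommRing R] [AddCommGroup M] [Module R M]
    {I : Ideal R} {N₁ N₂ : Submodule R M} (h : I • N₁ ≤ N₂) :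
    Module.IsTorsionBySet R (N₁ ⧸ N₂.comap N₁.subtype) I := by
  intro x a
  obtain ⟨y, rfl⟩ := Quotient.mk_surjective _ x
  rw [← Quotient.mk_smul, Quotient.mk_eq_zero, mem_comap]
  exact h (smul_mem_smul a.2 y.2)

section Localization

variable {R : Type*} (S : Type*) {M N : Type*} [CommRing R] [CommRing S]
  [AddCommGroup M] [AddCommGroup N] [Module R M] [Module R N] [Algebra R S]
  [Module S N] [IsScalarTower R S N]
  (p : Submonoid R) [IsLocalization p S] (f : M →ₗ[R] N) [IsLocalizedModule p f]

theorem localized'_mono {N₁ N₂ : Submodule R M} (h : N₁ ≤ N₂) :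
    N₁.localized' S p f ≤ N₂.localized' S p f :=
  (localized'gi S p f).gc.monotone_l h

theorem coe_mk'_toLocalized' (N₁ : Submodule R M) (m : N₁) (s : p) :
    ((IsLocalizedModule.mk' (N₁.toLocalized' S p f) m s : N₁.localized' S p f) : N) =
      IsLocalizedModule.mk' f (m : M) s := by
  rw [← IsLocalizedModule.smul_inj f s, IsLocalizedModule.mk'_cancel',
    ← SetLike.val_smul_of_tower, IsLocalizedModule.mk'_cancel', toLocalized'_apply_coe]

theorem localized'_comap_subtype {N₁ N₂ : Submodule R M} (h : N₂ ≤ N₁) :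
    (N₂.comap N₁.subtype).localized' S p (N₁.toLocalized' S p f) =
      (N₂.localized' S p f).comap (N₁.localized' S p f).subtype := by
  ext x
  rw [mem_localized', mem_comap, mem_localized']
  constructor
  · rintro ⟨m, hm, s, rfl⟩
    exact ⟨m, hm, s, (coe_mk'_toLocalized' S p f N₁ m s).symm⟩
  · rintro ⟨m, hm, s, hs⟩
    exact ⟨⟨m, h hm⟩, hm, s, Subtype.ext ((coe_mk'_toLocalized' S p f N₁ _ s).trans hs)⟩

theorem exists_isLocalizedModule_subquotient {N₁ N₂ : Submodule R M} (h : N₂ ≤ N₁) :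
    ∃ φ : (N₁ ⧸ N₂.comap N₁.subtype) →ₗ[R]
      (N₁.localized' S p f ⧸ (N₂.localized' S p f).comap (N₁.localized' S p f).subtype),
      IsLocalizedModule p φ :=
  ⟨((quotEquivOfEq _ _ (localized'_comap_subtype S p f h)).restrictScalars R).toLinearMap ∘ₗ
      (N₂.comap N₁.subtype).toLocalizedQuotient' S p (N₁.toLocalized' S p f),
    IsLocalizedModule.of_linearEquiv p _ _⟩

end Localization

end Submodule

theorem freeFilterable_of_antitone {R : Type u} [CommRing R] {P : Ideal R} {M : Type v}
    [AddCommGroup M] [Module R M] (Q : ℕ → Submodule R M) (k : ℕ) (hQ : Antitone Q)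
    (h0 : Q 0 = ⊤) (hk : Q k = ⊥) (hfg : ∀ j, (Q j).FG)
    (hfree : ∀ j < k, ∃ ι : Type v,
      Nonempty ((Q j ⧸ (Q (j + 1)).comap (Q j).subtype) ≃ₗ[R] (ι →₀ R ⧸ P))) :
    FreeFilterable R P M := by
  refine ⟨fun n => Q (k - n), by simpa using hk, fun n => hQ (by omega), fun n => hfg _,
    eq_top_iff.mpr (le_iSup_of_le k (by simp [h0])), fun n => ?_⟩
  show ∃ ι : Type v, Nonempty ((Q (k - (n + 1)) ⧸ (Q (k - n)).comap (Q (k - (n + 1))).subtype)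
    ≃ₗ[R] (ι →₀ R ⧸ P))
  rcases lt_or_ge n k with hn | hn
  · rw [show k - n = k - (n + 1) + 1 by omega]
    exact hfree _ (by omega)
  · rw [show k - n = k - (n + 1) by omega]
    have : Subsingleton (Q (k - (n + 1)) ⧸ (Q (k - (n + 1))).comap (Q (k - (n + 1))).subtype) :=
      Submodule.Quotient.subsingleton_iff.mpr (comap_subtype_self _)
    exact ⟨PEmpty, ⟨LinearEquiv.ofSubsingleton _ _⟩⟩

theorem generically_freeFilterable
    {R : Type u} [CommRing R] [IsNoetherianRing R] (P : Ideal R) (hP : P.IsPrime)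
    (M : Type u) [AddCommGroup M] [Module R M] [Module.Finite R M]
    (hkill : ∃ k : ℕ, ∀ x : M, ∀ a ∈ P ^ k, a • x = 0) :
    ∃ g : R, g ∉ P ∧
      FreeFilterable (Localization.Away g)
        (P.map (algebraMap R (Localization.Away g)))
        (LocalizedModule (Submonoid.powers g) M) := by
  obtain ⟨k, hk⟩ := hkill
  have : IsDomain (R ⧸ P) := (Ideal.Quotient.isDomain_iff_prime P).mpr hP
  let Q : ℕ → Submodule R M := fun j => P ^ j • ⊤
  have hQ : Antitone Q := fun i j hij => smul_mono_left (Ideal.pow_le_pow_right hij)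
  have hTor (j : ℕ) := isTorsionBySet_subquotient (I := P) (N₁ := Q j) (N₂ := Q (j + 1)) <| by
    show P • (P ^ j • ⊤) ≤ P ^ (j + 1) • ⊤
    rw [pow_succ', ← smul_eq_mul, smul_assoc]
  let (j : ℕ) := (hTor j).module
  have (j : ℕ) := (hTor j).isScalarTower (S := R)
  have (j : ℕ) :=
    Module.Finite.of_restrictScalars_finite R (R ⧸ P) (Q j ⧸ (Q (j + 1)).comap (Q j).subtype)
  obtain ⟨c, hc, hI⟩ := exists_linearIndepOn_smul_mem_span_of_forall_lt (A := R ⧸ P) k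
    fun j => Q j ⧸ (Q (j + 1)).comap (Q j).subtype
  obtain ⟨g, rfl⟩ := Ideal.Quotient.mk_surjective c
  refine ⟨g, mt Ideal.Quotient.eq_zero_iff_mem.mpr hc, ?_⟩
  let f := LocalizedModule.mkLinearMap (Submonoid.powers g) M
  refine freeFilterable_of_antitone (fun j => (Q j).localized' (Localization.Away g) (.powers g) f)
    k (fun i j hij => localized'_mono _ _ f (hQ hij)) ?_ ?_ (fun j => IsNoetherian.noetherian _) ?_
  · simp [Q, localized'_top]
  · have hQk : Q k = ⊥ :=
      eq_bot_iff.mpr <| smul_le.mpr fun a ha x _ => by rw [hk x a ha]; exact zero_mem _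
    simp only [hQk, localized'_bot]
  · intro j hj
    obtain ⟨I, hIind, hIspan⟩ := hI j hj
    obtain ⟨φ, hφ⟩ :=
      exists_isLocalizedModule_subquotient (Localization.Away g) (.powers g) f (hQ j.le_succ)
    exact ⟨I, IsLocalizedModule.nonempty_linearEquiv_finsupp_quotient _ (Submonoid.mem_powers g)
      hIind hIspan _ φ⟩
end

section
/- If an R-module M has an ascending filtration by a countable sequence of submodules whose union is M and whose successive factors are each free filterable relative to P, then M itself is free filterable relative to P. -/
/-!
For a proper ideal `P` of a Noetherian ring, `M` is free filterable relative to `P` exactly when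
it is spanned by a sequence `x₀, x₁, …` in which every `xₖ` either lies in the span of its
predecessors or has annihilator exactly `P` modulo them; one direction refines a filtration with
free factors one basis vector at a time.

Lifting such sequences from the factors `N (n + 1) / N n` gives elements `y n j` of `M`, and the
countably many sequences have to be interleaved into one. Because `R` is Noetherian, the
multiples of `y n j` lying in `N n + span {y n i | i < j}` are already spanned by finitely many
`y m i`; enumerating the pairs `(n, j)` so that these witnesses always come first keeps every
colon ideal equal to `P` or `R`, since the part enumerated so far meets `N (n + 1)` only inside
`N n + span {y n i | i < j}`. Refining a free filtration is itself such an interleaving.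
-/

universe u v

open Submodule Set

section FreeSteps

variable {R : Type u} [CommRing R] {M : Type v} [AddCommGroup M] [Module R M] {P : Ideal R}

def IsFreeStep (P : Ideal R) (K : Submodule R M) (w : M) : Prop :=
  w ∈ K ∨ ∀ r : R, r • w ∈ K ↔ r ∈ P

theorem isFreeStep_congr {M' : Type*} [AddCommGroup M'] [Module R M']
    {K : Submodule R M} {K' : Submodule R M'} {w : M} {w' : M'}
    (h : ∀ r : R, r • w ∈ K ↔ r • w' ∈ K') : IsFreeStep P K w ↔ IsFreeStep P K' w' := by
  have h1 : w ∈ K ↔ w' ∈ K' := by simpa using h 1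
  simp only [IsFreeStep, h1, h]

theorem span_image_Iio_succ (x : ℕ → M) (k : ℕ) :
    span R (x '' Iio (k + 1)) = span R (x '' Iio k) ⊔ span R {x k} := by
  rw [Iio_add_one_eq_Iic, ← Iio_insert, image_insert_eq, span_insert, sup_comm]

theorem iSup_span_image_Iio (x : ℕ → M) :
    ⨆ k, span R (x '' Iio k) = span R (range x) := by
  rw [← span_iUnion, ← image_iUnion, iUnion_Iio, image_univ]

theorem exists_linearEquiv_of_isFreeStep {K : Submodule R M} {w : M} (h : IsFreeStep P K w) :
    ∃ ι : Type v, Nonempty ((↥(K ⊔ span R {w}) ⧸ comap (K ⊔ span R {w}).subtype K)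
      ≃ₗ[R] (ι →₀ R ⧸ P)) := by
  set L := K ⊔ span R {w}
  rcases h with hw | hP
  · have : Subsingleton (L ⧸ comap L.subtype K) := by
      rw [Submodule.Quotient.subsingleton_iff, comap_subtype_eq_top]
      exact sup_le le_rfl ((span_singleton_le_iff_mem _ _).2 hw)
    exact ⟨PEmpty, ⟨LinearEquiv.ofSubsingleton _ _⟩⟩
  let ψ : R →ₗ[R] L ⧸ comap L.subtype K := (comap L.subtype K).mkQ ∘ₗ
    LinearMap.toSpanSingleton R L ⟨w, mem_sup_right (mem_span_singleton_self w)⟩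
  have hker : LinearMap.ker ψ = P := by
    ext r
    simp [ψ, ← hP r]
  have hsurj : Function.Surjective ψ := by
    rintro ⟨⟨l, hl⟩⟩
    obtain ⟨k, hk, v, hv, rfl⟩ := mem_sup.1 hl
    obtain ⟨r, rfl⟩ := mem_span_singleton.1 hv
    refine ⟨r, (Submodule.Quotient.eq _).2 ?_⟩
    simpa [ψ] using neg_mem hk
  exact ⟨PUnit, ⟨((quotEquivOfEq _ _ hker.symm).trans (ψ.quotKerEquivOfSurjective hsurj)).symm.trans
    (Finsupp.uniqueLinearEquiv R (R ⧸ P) PUnit.unit).symm⟩⟩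

structure IsFreeFilteringSeq (P : Ideal R) (x : ℕ → M) : Prop where
  span_range : span R (range x) = ⊤
  isFreeStep : ∀ k, IsFreeStep P (span R (x '' Iio k)) (x k)

structure IsRelFreeFilteringSeq (P : Ideal R) (K L : Submodule R M) (y : ℕ → M) : Prop where
  mem : ∀ j, y j ∈ L
  le_sup_span : L ≤ K ⊔ span R (range y)
  isFreeStep : ∀ j, IsFreeStep P (K ⊔ span R (y '' Iio j)) (y j)

theorem IsFreeFilteringSeq.freeFilterable {x : ℕ → M} (hx : IsFreeFilteringSeq P x) :
    FreeFilterable R P M := by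
  refine ⟨fun k => span R (x '' Iio k), by simp, fun k => ?_,
    fun k => fg_span ((finite_Iio k).image x), ?_, fun k => ?_⟩
  · exact span_mono (image_mono (Iio_subset_Iio k.le_succ))
  · rw [iSup_span_image_Iio, hx.span_range]
  · beta_reduce
    rw [span_image_Iio_succ]
    exact exists_linearEquiv_of_isFreeStep (hx.isFreeStep k)

theorem IsFreeFilteringSeq.map_linearEquiv {M' : Type*} [AddCommGroup M'] [Module R M']
    {x : ℕ → M} (hx : IsFreeFilteringSeq P x) (e : M ≃ₗ[R] M') :
    IsFreeFilteringSeq P (e ∘ x) where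
  span_range := by simp [range_comp, hx.span_range]
  isFreeStep k := by
    refine (isFreeStep_congr fun r => ?_).1 (hx.isFreeStep k)
    rw [image_comp, Function.comp_apply, ← map_smul]
    exact (apply_mem_span_image_iff_mem_span (f := (e : M →ₗ[R] M')) e.injective).symm

theorem mkQ_mem_span_image_iff {K L : Submodule R M} (hKL : K ≤ L) (w : L) (T : Set L) :
    (K.comap L.subtype).mkQ w ∈ span R ((K.comap L.subtype).mkQ '' T) ↔
      (w : M) ∈ K ⊔ span R ((↑) '' T) := by
  have hmap : map L.subtype (comap L.subtype K ⊔ span R T) = K ⊔ span R ((↑) '' T) := by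
    rw [Submodule.map_sup, map_comap_subtype, inf_eq_right.2 hKL, map_span, L.coe_subtype]
  rw [← map_span, ← mem_comap, comap_map_mkQ, ← hmap]
  simp only [mem_map, subtype_apply, SetLike.coe_eq_coe, exists_eq_right]

theorem IsFreeFilteringSeq.lift {K L : Submodule R M} (hKL : K ≤ L)
    {x : ℕ → L ⧸ K.comap L.subtype} (hx : IsFreeFilteringSeq P x) :
    ∃ y : ℕ → M, IsRelFreeFilteringSeq P K L y := by
  choose yL hyL using fun j => (K.comap L.subtype).mkQ_surjective (x j)
  obtain rfl : x = (K.comap L.subtype).mkQ ∘ yL := funext fun j => (hyL j).symm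
  refine ⟨fun j => yL j, fun j => (yL j).2, fun l hl => ?_, fun j => ?_⟩
  · have := (mkQ_mem_span_image_iff hKL ⟨l, hl⟩ (range yL)).1
      (by rw [← range_comp, hx.span_range]; exact mem_top)
    rwa [← range_comp] at this
  · refine (isFreeStep_congr fun r => ?_).1 (hx.isFreeStep j)
    rw [image_comp, Function.comp_apply, ← map_smul, mkQ_mem_span_image_iff hKL, ← image_comp]
    rfl

theorem Finsupp.span_range_single_one (P : Ideal R) (ι : Type*) :
    span R (range fun a : ι => Finsupp.single a (1 : R ⧸ P)) = ⊤ := by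
  rw [← restrictScalars_span R (R ⧸ P) Ideal.Quotient.mk_surjective,
    ← Finsupp.coe_basisSingleOne, Module.Basis.span_eq, restrictScalars_top]

theorem Ideal.Quotient.smul_one_eq_zero_iff (P : Ideal R) (r : R) :
    r • (1 : R ⧸ P) = 0 ↔ r ∈ P := by
  rw [Algebra.smul_def, mul_one, Ideal.Quotient.algebraMap_eq, Ideal.Quotient.eq_zero_iff_mem]

theorem exists_isFreeFilteringSeq_finsupp (P : Ideal R) (ι : Type*) [Finite ι] :
    ∃ x : ℕ → ι →₀ R ⧸ P, IsFreeFilteringSeq P x := by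
  obtain ⟨c, ⟨e⟩⟩ := Finite.exists_equiv_fin ι
  let x (i : ℕ) : ι →₀ R ⧸ P := if h : i < c then Finsupp.single (e.symm ⟨i, h⟩) 1 else 0
  refine ⟨x, ⟨eq_top_iff.2 ?_, fun i => ?_⟩⟩
  · rw [← Finsupp.span_range_single_one P ι]
    refine span_mono ?_
    rintro _ ⟨a, rfl⟩
    exact ⟨e a, by simp [x]⟩
  by_cases hi : i < c
  swap
  · exact Or.inl (by simp [x, hi])
  refine Or.inr fun r => ⟨fun hr => ?_, fun hr => ?_⟩
  · have hvanish : span R (x '' Iio i) ≤ LinearMap.ker (Finsupp.lapply (e.symm ⟨i, hi⟩)) := by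
      rw [span_le]
      rintro _ ⟨j, hj : j < i, rfl⟩
      by_cases hjc : j < c
      · simp [x, hjc, Fin.ext_iff, hj.ne]
      · simp [x, hjc]
    simpa [x, hi, Ideal.Quotient.smul_one_eq_zero_iff] using hvanish hr
  · simp [x, hi, Finsupp.smul_single, (Ideal.Quotient.smul_one_eq_zero_iff P r).2 hr]

end FreeSteps

section Enumeration

variable {D : ℕ → ℕ → ℕ →₀ ℕ}

/- A finite set of pairs `(n, j)` that meets every level `n` in an initial segment is encoded by
`f : ℕ →₀ ℕ` as `{(n, j) | j < f n}`; `D n j` encodes the pairs that have to precede `(n, j)`. -/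
def IsDepClosed (D : ℕ → ℕ → ℕ →₀ ℕ) (f : ℕ →₀ ℕ) : Prop :=
  ∀ n j, j < f n → D n j ≤ f

theorem isDepClosed_zero : IsDepClosed D 0 :=
  fun _ j hj => absurd hj (Nat.not_lt_zero j)

theorem IsDepClosed.sup {f g : ℕ →₀ ℕ} (hf : IsDepClosed D f) (hg : IsDepClosed D g) :
    IsDepClosed D (f ⊔ g) := by
  intro n j hj
  rw [Finsupp.sup_apply, lt_sup_iff] at hj
  rcases hj with hj | hj
  · exact (hf n j hj).trans le_sup_left
  · exact (hg n j hj).trans le_sup_right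

theorem add_single_one_le {f g : ℕ →₀ ℕ} {m : ℕ} (hfg : f ≤ g) (hm : f m < g m) :
    f + Finsupp.single m 1 ≤ g := by
  intro n
  rw [Finsupp.add_apply, Finsupp.single_apply]
  split_ifs with h
  · exact h ▸ hm
  · simpa using hfg n

variable (hD_gt : ∀ n j m, n < m → D n j m = 0) (hD_self : ∀ n j, D n j n ≤ j)
include hD_gt hD_self

theorem IsDepClosed.sup_single {h : ℕ →₀ ℕ} {L k : ℕ} (hh : IsDepClosed D h)
    (hlow : ∀ j < k, ∀ m < L, D L j m ≤ h m) : IsDepClosed D (h ⊔ Finsupp.single L k) := by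
  intro n j hj
  rw [Finsupp.sup_apply, lt_sup_iff] at hj
  rcases hj with hj | hj
  · exact (hh n j hj).trans le_sup_left
  obtain ⟨rfl, hjk⟩ : n = L ∧ j < k := by
    rw [Finsupp.single_apply] at hj
    split_ifs at hj with h <;> omega
  intro m
  rw [Finsupp.sup_apply]
  rcases lt_trichotomy m n with hm | rfl | hm
  · exact (hlow j hjk m hm).trans le_sup_left
  · exact (hD_self m j).trans (le_sup_of_le_right (by simp; omega))
  · simp [hD_gt n j m hm]

theorem exists_isDepClosed_forall_lt_le (L : ℕ) (t : ℕ →₀ ℕ) :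
    ∃ g, IsDepClosed D g ∧ ∀ m < L, t m ≤ g m := by
  induction L generalizing t with
  | zero => exact ⟨0, isDepClosed_zero, fun m hm => absurd hm (Nat.not_lt_zero m)⟩
  | succ L ih =>
    obtain ⟨h, hh, hth⟩ := ih (t ⊔ (Finset.range (t L)).sup (D L))
    refine ⟨h ⊔ Finsupp.single L (t L), hh.sup_single hD_gt hD_self fun j hj m hm => ?_,
      fun m hm => ?_⟩
    · exact ((Finset.le_sup (f := D L) (Finset.mem_range.2 hj)).trans le_sup_right m).trans
        (hth m hm)
    · rw [Finsupp.sup_apply]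
      rcases Nat.lt_succ_iff_lt_or_eq.1 hm with hm | rfl
      · exact (le_sup_left.trans (hth m hm)).trans le_sup_left
      · exact le_sup_of_le_right (by simp)

theorem exists_isDepClosed_lt (n j : ℕ) : ∃ g, IsDepClosed D g ∧ j < g n := by
  obtain ⟨g, hg, hgt⟩ :=
    exists_isDepClosed_forall_lt_le hD_gt hD_self (n + 1) (Finsupp.single n (j + 1))
  exact ⟨g, hg, by simpa using hgt n n.lt_succ_self⟩

theorem exists_lt_and_dep_le_of_lt {f g : ℕ →₀ ℕ} (hg : IsDepClosed D g) (hfg : f < g) :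
    ∃ m, f m < g m ∧ D m (f m) ≤ f := by
  classical
  have hex : ∃ m, f m < g m := by
    by_contra! h
    exact hfg.not_ge h
  refine ⟨Nat.find hex, Nat.find_spec hex, fun k => ?_⟩
  rcases lt_trichotomy k (Nat.find hex) with hk | rfl | hk
  · exact (hg _ _ (Nat.find_spec hex) k).trans (not_lt.1 (Nat.find_min hex hk))
  · exact hD_self _ _
  · simp [hD_gt _ _ _ hk]

theorem exists_isDepClosed_cofinal :
    ∃ G : ℕ → ℕ →₀ ℕ, (∀ s, IsDepClosed D (G s)) ∧ Monotone G ∧ ∀ n j, ∃ s, j < G s n := by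
  choose c hc hcj using exists_isDepClosed_lt hD_gt hD_self
  let G (s : ℕ) : ℕ →₀ ℕ := (Finset.range s).sup fun i => c i.unpair.1 i.unpair.2
  refine ⟨G, fun s => Finset.sup_induction isDepClosed_zero (fun _ h₁ _ h₂ => h₁.sup h₂)
    fun i _ => hc _ _, fun s t hst => Finset.sup_mono (Finset.range_subset_range.2 hst),
    fun n j => ⟨Nat.pair n j + 1, ?_⟩⟩
  have := Finset.le_sup (f := fun i => c i.unpair.1 i.unpair.2)
    (Finset.self_mem_range_succ (Nat.pair n j))
  exact (hcj n j).trans_le (by simpa using this n)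

theorem exists_isDepClosed_enumeration :
    ∃ (F : ℕ → ℕ →₀ ℕ) (μ : ℕ → ℕ), F 0 = 0 ∧ (∀ k, F (k + 1) = F k + Finsupp.single (μ k) 1) ∧
      (∀ k, D (μ k) (F k (μ k)) ≤ F k) ∧ ∀ n j, ∃ k, j < F k n := by
  obtain ⟨G, hG, hGmono, hGcover⟩ := exists_isDepClosed_cofinal hD_gt hD_self
  have hG_unbounded (f : ℕ →₀ ℕ) : {s | ¬ G s ≤ f}.Nonempty := by
    obtain ⟨s, hs⟩ := hGcover 0 (f 0)
    exact ⟨s, fun h => hs.not_ge (h 0)⟩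
  -- `G (σ f)` is the first target not yet below `f`; `next f` is a level at which `f` can grow
  -- towards it, all dependencies of the new pair being in `f` already.
  let σ (f : ℕ →₀ ℕ) : ℕ := sInf {s | ¬ G s ≤ f}
  let next (f : ℕ →₀ ℕ) : ℕ := Classical.epsilon fun m => f m < G (σ f) m ∧ D m (f m) ≤ f
  have hnext (f : ℕ →₀ ℕ) (hf : f ≤ G (σ f)) :
      f (next f) < G (σ f) (next f) ∧ D (next f) (f (next f)) ≤ f :=
    Classical.epsilon_spec (exists_lt_and_dep_le_of_lt hD_gt hD_self (hG _)
      (lt_of_le_not_ge hf (Nat.sInf_mem (hG_unbounded f))))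
  let F (k : ℕ) : ℕ →₀ ℕ := Nat.rec 0 (fun _ f => f + Finsupp.single (next f) 1) k
  have hF_le (k : ℕ) : F k ≤ G (σ (F k)) := by
    induction k with
    | zero => exact fun _ => Nat.zero_le _
    | succ k ih =>
      have hσ : σ (F k) ≤ σ (F (k + 1)) :=
        Nat.sInf_le fun h => Nat.sInf_mem (hG_unbounded _) (h.trans le_self_add)
      exact (add_single_one_le ih (hnext _ ih).1).trans (hGmono hσ)
  have hdeg (k : ℕ) : (F k).degree = k := by
    induction k with
    | zero => exact map_zero _
    | succ k ih =>
      rw [show F (k + 1) = F k + Finsupp.single (next (F k)) 1 from rfl, map_add, ih,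
        Finsupp.degree_single]
  have hreach (s k : ℕ) (hk : (G s).degree < k) : G s ≤ F k := by
    by_contra hs
    have hσ : σ (F k) ≤ s := Nat.sInf_le hs
    have := (hdeg k).symm.le.trans (Finsupp.degree_mono ((hF_le k).trans (hGmono hσ)))
    omega
  refine ⟨F, fun k => next (F k), rfl, fun k => rfl, fun k => (hnext _ (hF_le k)).2,
    fun n j => ?_⟩
  obtain ⟨s, hs⟩ := hGcover n j
  exact ⟨(G s).degree + 1, hs.trans_le (hreach s _ (Nat.lt_add_one _) n)⟩

end Enumeration

section Interleaving

variable {R : Type u} [CommRing R] {M : Type v} [AddCommGroup M] [Module R M] {P : Ideal R}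

theorem Submodule.FG.exists_le_of_le_iSup {U : Submodule R M} (hU : U.FG)
    {f : ℕ → Submodule R M} (hf : Monotone f) (h : U ≤ ⨆ J, f J) : ∃ J, U ≤ f J := by
  obtain ⟨s, hs⟩ := CompleteLattice.IsCompactElement.exists_finset_of_le_iSup _
    ((fg_iff_compact U).1 hU) f h
  exact ⟨s.sup id, hs.trans (iSup₂_le fun J hJ => hf (Finset.le_sup (f := id) hJ))⟩

variable (R) in
def levelSpan (y : ℕ → ℕ → M) (f : ℕ →₀ ℕ) : Submodule R M :=
  ⨆ n, span R (y n '' Iio (f n))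

variable {N : ℕ → Submodule R M} {y : ℕ → ℕ → M}

theorem levelSpan_le_iff {f : ℕ →₀ ℕ} {U : Submodule R M} :
    levelSpan R y f ≤ U ↔ ∀ n j, j < f n → y n j ∈ U := by
  simp [levelSpan, span_le, subset_def]

theorem mem_levelSpan {f : ℕ →₀ ℕ} {n j : ℕ} (h : j < f n) : y n j ∈ levelSpan R y f :=
  mem_iSup_of_mem n (subset_span ⟨j, h, rfl⟩)

theorem levelSpan_mono : Monotone (levelSpan R y) := fun _ _ h =>
  levelSpan_le_iff.2 fun _ _ hj => mem_levelSpan (hj.trans_le (h _))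

theorem levelSpan_zero : levelSpan R y 0 = ⊥ := by
  simp [levelSpan]

theorem levelSpan_add_single (f : ℕ →₀ ℕ) (m : ℕ) :
    levelSpan R y (f + Finsupp.single m 1) = levelSpan R y f ⊔ span R {y m (f m)} := by
  refine le_antisymm (levelSpan_le_iff.2 fun n j hj => ?_) (sup_le (levelSpan_mono le_self_add)
    ((span_singleton_le_iff_mem _ _).2 (mem_levelSpan (by simp))))
  by_cases hjn : j < f n
  · exact mem_sup_left (mem_levelSpan hjn)
  · obtain ⟨rfl, rfl⟩ : n = m ∧ j = f n := by
      rw [Finsupp.add_apply, Finsupp.single_apply] at hj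
      split_ifs at hj with h <;> omega
    exact mem_sup_right (mem_span_singleton_self _)

theorem le_iSup_levelSpan (hN0 : N 0 = ⊥) (hNy : ∀ n, N (n + 1) ≤ N n ⊔ span R (range (y n)))
    (n : ℕ) : N n ≤ ⨆ J, levelSpan R y (∑ m ∈ Finset.range n, Finsupp.single m J) := by
  induction n with
  | zero => simp [hN0]
  | succ n ih =>
    calc N (n + 1) ≤ N n ⊔ span R (range (y n)) := hNy n
      _ ≤ (⨆ J, levelSpan R y (∑ m ∈ Finset.range n, Finsupp.single m J)) ⊔
          ⨆ J, span R (y n '' Iio J) := sup_le_sup ih (iSup_span_image_Iio (y n)).ge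
      _ ≤ _ := by
        rw [← iSup_sup_eq]
        refine iSup_mono fun J => sup_le (levelSpan_mono ?_) (span_le.2 ?_)
        · simp [Finset.sum_range_succ]
        · rintro _ ⟨j, hj : j < J, rfl⟩
          refine mem_levelSpan ?_
          simp only [Finset.sum_range_succ, Finsupp.add_apply]
          simp
          omega

theorem exists_inf_span_singleton_le_levelSpan [IsNoetherianRing R] (hN0 : N 0 = ⊥)
    (hNy : ∀ n, N (n + 1) ≤ N n ⊔ span R (range (y n))) (n j : ℕ) :
    ∃ δ : ℕ →₀ ℕ, (∀ m, n < m → δ m = 0) ∧ δ n ≤ j ∧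
      (N n ⊔ span R (y n '' Iio j)) ⊓ span R {y n j} ≤ levelSpan R y δ := by
  let δ (J : ℕ) : ℕ →₀ ℕ := ∑ m ∈ Finset.range n, Finsupp.single m J + Finsupp.single n j
  have hδ_mono : Monotone fun J => levelSpan R y (δ J) := fun J J' hJ =>
    levelSpan_mono (add_le_add (Finset.sum_le_sum fun m _ => Finsupp.single_mono hJ) le_rfl)
  have hle : N n ⊔ span R (y n '' Iio j) ≤ ⨆ J, levelSpan R y (δ J) := by
    refine sup_le ((le_iSup_levelSpan hN0 hNy n).trans
      (iSup_mono fun J => levelSpan_mono le_self_add)) (le_iSup_of_le 0 (span_le.2 ?_))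
    rintro _ ⟨i, hi : i < j, rfl⟩
    exact mem_levelSpan (by simpa [δ] using hi)
  obtain ⟨J, hJ⟩ := ((fg_span_singleton (y n j)).of_le inf_le_right).exists_le_of_le_iSup
    hδ_mono (inf_le_left.trans hle)
  refine ⟨δ J, fun m hm => ?_, by simp [δ, Finsupp.single_apply], hJ⟩
  simp [δ, Finsupp.single_apply, hm.ne]
  omega

section Step

variable (hyN : ∀ n j, y n j ∈ N (n + 1)) {f : ℕ →₀ ℕ} {m : ℕ}
  (hI : ∀ n, levelSpan R y f ⊓ N (n + 1) ≤ N n ⊔ span R (y n '' Iio (f n)))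
  (hK : (N m ⊔ span R (y m '' Iio (f m))) ⊓ span R {y m (f m)} ≤ levelSpan R y f)
include hyN hI hK

theorem smul_mem_levelSpan_iff (r : R) :
    r • y m (f m) ∈ levelSpan R y f ↔ r • y m (f m) ∈ N m ⊔ span R (y m '' Iio (f m)) :=
  ⟨fun h => hI m ⟨h, smul_mem _ r (hyN m _)⟩,
    fun h => hK ⟨h, smul_mem _ r (mem_span_singleton_self _)⟩⟩

theorem levelSpan_add_single_inf_le (hmono : Monotone N) (n : ℕ) :
    levelSpan R y (f + Finsupp.single m 1) ⊓ N (n + 1) ≤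
      N n ⊔ span R (y n '' Iio ((f + Finsupp.single m 1 : ℕ →₀ ℕ) n)) := by
  rintro z ⟨hz, hzN⟩
  rw [levelSpan_add_single] at hz
  obtain ⟨a, ha, _, hb, rfl⟩ := mem_sup.1 hz
  obtain ⟨r, rfl⟩ := mem_span_singleton.1 hb
  rcases le_or_gt m n with hmn | hnm
  · have hw : y m (f m) ∈ N n ⊔ span R (y n '' Iio ((f + Finsupp.single m 1 : ℕ →₀ ℕ) n)) := by
      rcases hmn.lt_or_eq with hmn | rfl
      · exact mem_sup_left (hmono hmn (hyN m _))
      · exact mem_sup_right (subset_span ⟨f m, by simp, rfl⟩)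
    have haN : a ∈ N (n + 1) := by
      simpa using sub_mem hzN (smul_mem _ r (hmono (by omega : m + 1 ≤ n + 1) (hyN m (f m))))
    have hle : N n ⊔ span R (y n '' Iio (f n)) ≤
        N n ⊔ span R (y n '' Iio ((f + Finsupp.single m 1 : ℕ →₀ ℕ) n)) :=
      sup_le_sup_left (span_mono (image_mono (Iio_subset_Iio le_self_add))) _
    exact add_mem (hle (hI n ⟨ha, haN⟩)) (smul_mem _ r hw)
  · have hzm : a + r • y m (f m) ∈ N m := hmono (by omega : n + 1 ≤ m) hzN
    have haK : a ∈ N m ⊔ span R (y m '' Iio (f m)) := hI m ⟨ha, by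
      simpa using sub_mem (hmono m.le_succ hzm) (smul_mem _ r (hyN m (f m)))⟩
    have hr : r • y m (f m) ∈ levelSpan R y f := (smul_mem_levelSpan_iff hyN hI hK r).2 (by
      simpa using sub_mem (mem_sup_left hzm) haK)
    have hfn : (f + Finsupp.single m 1 : ℕ →₀ ℕ) n = f n := by simp [hnm.ne]
    exact hfn ▸ hI n ⟨add_mem ha hr, hzN⟩

end Step

theorem exists_isFreeFilteringSeq_of_iSup_eq_top [IsNoetherianRing R]
    (hN0 : N 0 = ⊥) (hmono : Monotone N) (hsup : ⨆ n, N n = ⊤)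
    (hy : ∀ n, IsRelFreeFilteringSeq P (N n) (N (n + 1)) (y n)) :
    ∃ x : ℕ → M, IsFreeFilteringSeq P x := by
  have hyN n j := (hy n).mem j
  have hNy n := (hy n).le_sup_span
  choose D hD_gt hD_self hD using exists_inf_span_singleton_le_levelSpan hN0 hNy
  obtain ⟨F, μ, hF0, hFsucc, hFdep, hFcover⟩ := exists_isDepClosed_enumeration hD_gt hD_self
  have hK (k : ℕ) : (N (μ k) ⊔ span R (y (μ k) '' Iio (F k (μ k)))) ⊓
      span R {y (μ k) (F k (μ k))} ≤ levelSpan R y (F k) :=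
    (hD _ _).trans (levelSpan_mono (hFdep k))
  have hI (k n : ℕ) : levelSpan R y (F k) ⊓ N (n + 1) ≤ N n ⊔ span R (y n '' Iio (F k n)) := by
    induction k generalizing n with
    | zero => simp [hF0, levelSpan_zero]
    | succ k ih => rw [hFsucc]; exact levelSpan_add_single_inf_le hyN ih (hK k) hmono n
  let x (k : ℕ) : M := y (μ k) (F k (μ k))
  have hspan (k : ℕ) : span R (x '' Iio k) = levelSpan R y (F k) := by
    induction k with
    | zero => simp [hF0, levelSpan_zero]
    | succ k ih => rw [span_image_Iio_succ, ih, hFsucc, levelSpan_add_single]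
  refine ⟨x, ⟨eq_top_iff.2 ?_, fun k => ?_⟩⟩
  · rw [← hsup, iSup_le_iff]
    refine fun n => (le_iSup_levelSpan hN0 hNy n).trans (iSup_le fun J => levelSpan_le_iff.2 ?_)
    intro m j _
    obtain ⟨k, hk⟩ := hFcover m j
    exact span_mono (image_subset_range _ _) (hspan k ▸ mem_levelSpan hk)
  · rw [hspan]
    exact (isFreeStep_congr (smul_mem_levelSpan_iff hyN (hI k) (hK k))).2 ((hy _).isFreeStep _)

theorem exists_isRelFreeFilteringSeq_of_linearEquiv (hP : P ≠ ⊤) {K L : Submodule R M}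
    (hKL : K ≤ L) (hL : L.FG) {ι : Type*} (e : (L ⧸ K.comap L.subtype) ≃ₗ[R] (ι →₀ R ⧸ P)) :
    ∃ y : ℕ → M, IsRelFreeFilteringSeq P K L y := by
  have : Module.Finite R L := Module.Finite.iff_fg.2 hL
  have hfin : Module.Finite R (ι →₀ R ⧸ P) := Module.Finite.equiv e
  have : Nontrivial (R ⧸ P) := Ideal.Quotient.nontrivial_iff.2 hP
  have : Finite ι := by
    rcases Module.finite_finsupp_iff.1 hfin with h | h | h
    · infer_instance
    · exact absurd h (not_subsingleton _)
    · exact h.2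
  obtain ⟨x, hx⟩ := exists_isFreeFilteringSeq_finsupp P ι
  exact (hx.map_linearEquiv e.symm).lift hKL

theorem FreeFilterable.exists_isFreeFilteringSeq [IsNoetherianRing R] (hP : P ≠ ⊤)
    (h : FreeFilterable R P M) : ∃ x : ℕ → M, IsFreeFilteringSeq P x := by
  obtain ⟨F, hF0, hFmono, hFfg, hFsup, hFfactor⟩ := h
  choose ι e using hFfactor
  choose y hy using fun k =>
    exists_isRelFreeFilteringSeq_of_linearEquiv hP (hFmono k) (hFfg (k + 1)) (e k).some
  exact exists_isFreeFilteringSeq_of_iSup_eq_top hF0 (monotone_nat_of_le_succ hFmono) hFsup hy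

end Interleaving

theorem freeFilterable_of_filtration_freeFilterable
    {R : Type u} [CommRing R] [IsNoetherianRing R] (P : Ideal R) (hP : P.IsPrime)
    (M : Type v) [AddCommGroup M] [Module R M]
    (N : ℕ → Submodule R M)
    (h0 : N 0 = ⊥)
    (hmono : ∀ n, N n ≤ N (n + 1))
    (hsup : (⨆ n, N n) = ⊤)
    (hfactors : ∀ n, FreeFilterable R P
      (↥(N (n + 1)) ⧸ Submodule.comap (N (n + 1)).subtype (N n))) :
    FreeFilterable R P M := by
  choose x hx using fun n => (hfactors n).exists_isFreeFilteringSeq hP.ne_top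
  choose y hy using fun n => (hx n).lift (hmono n)
  obtain ⟨z, hz⟩ :=
    exists_isFreeFilteringSeq_of_iSup_eq_top h0 (monotone_nat_of_le_succ hmono) hsup hy
  exact hz.freeFilterable
end

section
/- Let B be a Noetherian ring, R a Noetherian B-algebra, I an ideal of R, and M a finitely generated R-module such that the associated graded module gr_I(M) = ⊕_{n} I^nM/I^{n+1}M is flat over B. Then M/I^tM is flat over B for every t ∈ ℕ. Moreover, if for every prime ideal q of B the module q ⊗_B M is I-adically separated, then M itself is B-flat. -/
/-!
STATEMENT 4.  `B` Noetherian, `R` a Noetherian `B`-algebra, `I` an ideal of `R`,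
`M` a finitely generated `R`-module such that the associated graded module
`gr_I(M) = ⊕ IⁿM/Iⁿ⁺¹M` is `B`-flat (equivalently, each graded piece
`IⁿM/Iⁿ⁺¹M` is `B`-flat).  Then `M/IᵗM` is `B`-flat for every `t`; and if for
every prime `q` of `B` the module `M ⊗_B q` is `I`-adically separated, then `M`
is `B`-flat.
-/

open scoped TensorProduct

section AuxLemmas

open Function LinearMap

/-- A subsingleton module is flat. -/
theorem auxFlat.of_subsingleton (B N : Type*) [CommRing B] [AddCommGroup N] [Module B N]
    [Subsingleton N] : Module.Flat B N := by
  rw [Module.Flat.iff_lTensor_injective']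
  intro q x y _
  have h : ∀ z : N ⊗[B] q, z = 0 := by
    intro z
    induction z using TensorProduct.induction_on with
    | zero => rfl
    | tmul n a => rw [Subsingleton.elim n 0, TensorProduct.zero_tmul]
    | add u v hu hv => rw [hu, hv, add_zero]
  rw [h x, h y]

/-- Flat modules are closed under extensions. -/
theorem auxFlat.extension {B A C D : Type*} [CommRing B]
    [AddCommGroup A] [Module B A] [AddCommGroup C] [Module B C] [AddCommGroup D] [Module B D]
    (f : A →ₗ[B] C) (g : C →ₗ[B] D) (hf : Function.Injective f) (hg : Function.Surjective g)
    (hfg : Function.Exact f g) (hA : Module.Flat B A) (hD : Module.Flat B D) :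
    Module.Flat B C := by
  rw [Module.Flat.iff_lTensor_injective']
  intro q
  rw [injective_iff_map_eq_zero]
  intro x hx
  have hy : rTensor (↥q) g x = 0 := by
    refine (injective_iff_map_eq_zero _).mp
      (Module.Flat.lTensor_preserves_injective_linearMap (M := D) q.subtype q.injective_subtype)
      _ ?_
    rw [← LinearMap.comp_apply, lTensor_comp_rTensor, ← rTensor_comp_lTensor,
      LinearMap.comp_apply, hx, map_zero]
  obtain ⟨a, ha⟩ := (rTensor_exact (↥q) hfg hg x).mp hy
  have h2 : rTensor B f (lTensor A q.subtype a) = 0 := by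
    rw [← LinearMap.comp_apply, rTensor_comp_lTensor, ← lTensor_comp_rTensor,
      LinearMap.comp_apply, ha, hx]
  have h3 : lTensor A q.subtype a = 0 :=
    (injective_iff_map_eq_zero _).mp
      (Module.Flat.rTensor_preserves_injective_linearMap (M := B) f hf) _ h2
  have h4 : a = 0 :=
    (injective_iff_map_eq_zero _).mp
      (Module.Flat.lTensor_preserves_injective_linearMap (M := A) q.subtype q.injective_subtype)
      _ h3
  rw [← ha, h4, map_zero]

/-- Dévissage: over a Noetherian ring, if `M ⊗ q → M ⊗ B` is injective for all primes `q`,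
then `M` is flat. -/
theorem auxFlat.of_primes (B M : Type*) [CommRing B] [IsNoetherianRing B]
    [AddCommGroup M] [Module B M]
    (h : ∀ q : Ideal B, q.IsPrime → Function.Injective (lTensor M q.subtype)) :
    Module.Flat B M := by
  rw [Module.Flat.iff_lTensor_injective']
  by_contra hc
  push_neg at hc
  obtain ⟨q, hqS, hqmax⟩ :=
    set_has_maximal_iff_noetherian.mpr (inferInstance : IsNoetherian B B)
      {J : Ideal B | ¬ Function.Injective (lTensor M J.subtype)} hc
  have hgood : ∀ J : Ideal B, q < J → Function.Injective (lTensor M J.subtype) := by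
    intro J hJ
    by_contra hbad
    exact hqmax J hbad hJ
  -- q ≠ ⊤
  have htop : q ≠ ⊤ := by
    rintro rfl
    apply hqS
    have hleft : Function.LeftInverse
        (lTensor M ((Submodule.topEquiv (R := B) (M := B)).symm.toLinearMap))
        (lTensor M (Submodule.subtype (⊤ : Ideal B))) := by
      intro z
      rw [← LinearMap.comp_apply, ← lTensor_comp]
      have : ((Submodule.topEquiv (R := B) (M := B)).symm.toLinearMap).comp
          (Submodule.subtype (⊤ : Ideal B)) = LinearMap.id := by
        ext x; rfl
      rw [this, lTensor_id, LinearMap.id_apply]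
    exact hleft.injective
  -- q is prime
  have hq : Ideal.IsPrime q := by
    refine ⟨htop, ?_⟩
    intro a b hab
    by_contra hnab
    push_neg at hnab
    obtain ⟨ha, hb⟩ := hnab
    set J : Ideal B := q ⊔ Ideal.span {a} with hJdef
    have haJ : a ∈ J := Submodule.mem_sup_right (Ideal.subset_span (Set.mem_singleton a))
    have hqJ : q < J := lt_of_le_of_ne le_sup_left (fun hEq => ha (by rw [hEq]; exact haJ))
    set c : Ideal B := Submodule.comap (LinearMap.toSpanSingleton B B a) q with hcdef
    have hmemc : ∀ t : B, t ∈ c ↔ t * a ∈ q := by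
      intro t
      simp [hcdef, LinearMap.toSpanSingleton_apply, smul_eq_mul]
    have hqc : q < c := by
      refine lt_of_le_of_ne ?_ ?_
      · intro t ht
        exact (hmemc t).mpr (Ideal.mul_mem_right a q ht)
      · intro hEq
        apply hb
        rw [hEq]
        exact (hmemc b).mpr (by rwa [mul_comm])
    -- the maps
    set π : (B × ↥q) →ₗ[B] ↥J :=
      (LinearMap.toSpanSingleton B (↥J) ⟨a, haJ⟩).coprod (Submodule.inclusion le_sup_left) with hπ
    have hπapply : ∀ (t : B) (s : ↥q), ((π (t, s) : ↥J) : B) = t * a + (s : B) := by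
      intro t s; simp [hπ, LinearMap.toSpanSingleton_apply, smul_eq_mul, Submodule.coe_inclusion]
    set gneg : ↥c →ₗ[B] ↥q :=
      LinearMap.codRestrict q ((-(LinearMap.toSpanSingleton B B a)).comp c.subtype)
        (fun t => q.neg_mem ((hmemc t).mp t.2)) with hgneg
    set g : ↥c →ₗ[B] (B × ↥q) := (c.subtype).prod gneg with hg
    have hgapply : ∀ t : ↥c, g t = ((t : B), gneg t) := fun t => rfl
    have hgnegapply : ∀ t : ↥c, ((gneg t : ↥q) : B) = -((t : B) * a) := by
      intro t; simp [hgneg, LinearMap.toSpanSingleton_apply, smul_eq_mul]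
    have hexact : Function.Exact g π := by
      rintro ⟨t, s⟩
      constructor
      · intro h0
        have h0' : t * a + (s : B) = 0 := by rw [← hπapply t s, h0]; rfl
        have hta : t * a = -(s : B) := eq_neg_of_add_eq_zero_left h0'
        have htc : t ∈ c := (hmemc t).mpr (by rw [hta]; exact q.neg_mem s.2)
        refine ⟨⟨t, htc⟩, ?_⟩
        rw [hgapply]
        refine Prod.ext rfl (Subtype.ext ?_)
        rw [hgnegapply]
        simp only
        rw [hta, neg_neg]
      · rintro ⟨t, hteq⟩
        rw [← hteq]
        apply Subtype.ext
        rw [hgapply t, hπapply, hgnegapply, ZeroMemClass.coe_zero]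
        ring
    have hsurj : Function.Surjective π := by
      rintro ⟨j, hj⟩
      rw [hJdef] at hj
      obtain ⟨y, hy, z, hz, rfl⟩ := Submodule.mem_sup.mp hj
      obtain ⟨t, ht⟩ := Ideal.mem_span_singleton'.mp hz
      exact ⟨(t, ⟨y, hy⟩), Subtype.ext (by rw [hπapply]; rw [ht]; ring)⟩
    have hEx := lTensor_exact M hexact hsurj
    -- injectivity of lTensor M (inclusion q ≤ J)
    have hincl : Function.Injective (lTensor M (Submodule.inclusion hqJ.le)) := by
      rw [injective_iff_map_eq_zero]
      intro x hx
      set i₂ : ↥q →ₗ[B] (B × ↥q) := LinearMap.prod 0 LinearMap.id with hi₂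
      have hπi : π.comp i₂ = Submodule.inclusion hqJ.le := by
        ext s
        show ((π (i₂ s) : ↥J) : B) = ((Submodule.inclusion hqJ.le s : ↥J) : B)
        rw [show i₂ s = (0, s) from rfl, hπapply, Submodule.coe_inclusion]
        ring
      have h1 : lTensor M π (lTensor M i₂ x) = 0 := by
        rw [← LinearMap.comp_apply, ← lTensor_comp, hπi, hx]
      obtain ⟨w, hw⟩ := (hEx _).mp h1
      have hfstg : (LinearMap.fst B B ↥q).comp g = c.subtype := by ext t; rfl
      have hfsti : (LinearMap.fst B B ↥q).comp i₂ = 0 := by ext t; rfl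
      have h2 : lTensor M c.subtype w = 0 := by
        rw [← hfstg, lTensor_comp, LinearMap.comp_apply, hw, ← LinearMap.comp_apply,
          ← lTensor_comp, hfsti, lTensor_zero, LinearMap.zero_apply]
      have hw0 : w = 0 :=
        (injective_iff_map_eq_zero _).mp (hgood c hqc) _ h2
      rw [hw0, map_zero] at hw
      have hsndi : (LinearMap.snd B B ↥q).comp i₂ = LinearMap.id := by ext t; rfl
      calc x = lTensor M ((LinearMap.snd B B ↥q).comp i₂) x := by rw [hsndi, lTensor_id]; rfl
        _ = lTensor M (LinearMap.snd B B ↥q) (lTensor M i₂ x) := by rw [lTensor_comp]; rfl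
        _ = 0 := by rw [← hw, map_zero]
    -- conclude injectivity for q, contradiction
    apply hqS
    have hcomp : (Submodule.subtype J).comp (Submodule.inclusion hqJ.le) = Submodule.subtype q := by
      ext s; rfl
    rw [← hcomp, lTensor_comp]
    exact (hgood J hqJ).comp hincl
  exact hqS (h q hq)

end AuxLemmas

theorem flat_of_gr_flat
    (B : Type*) [CommRing B] [IsNoetherianRing B]
    (R : Type*) [CommRing R] [IsNoetherianRing R] [Algebra B R]
    (I : Ideal R)
    (M : Type*) [AddCommGroup M] [Module R M] [Module B M] [IsScalarTower B R M]
    [SMulCommClass B R M] [Module.Finite R M]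
    (hgr : ∀ n : ℕ, Module.Flat B
      (↥(I ^ n • (⊤ : Submodule R M)) ⧸
        Submodule.comap (I ^ n • (⊤ : Submodule R M)).subtype
          (I ^ (n + 1) • (⊤ : Submodule R M)))) :
    (∀ t : ℕ, Module.Flat B (M ⧸ (I ^ t • (⊤ : Submodule R M)))) ∧
    ((∀ q : Ideal B, q.IsPrime →
        (⨅ t : ℕ, (I ^ t • (⊤ : Submodule R (M ⊗[B] ↥q)))) = ⊥) →
      Module.Flat B M) := by
  have part1 : ∀ t : ℕ, Module.Flat B (M ⧸ (I ^ t • (⊤ : Submodule R M))) := by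
    intro t
    induction t with
    | zero =>
      have htop : I ^ 0 • (⊤ : Submodule R M) = ⊤ := by
        rw [pow_zero, Ideal.one_eq_top, Submodule.top_smul]
      haveI : Subsingleton (M ⧸ (I ^ 0 • (⊤ : Submodule R M))) :=
        Submodule.Quotient.subsingleton_iff.mpr htop
      exact auxFlat.of_subsingleton B _
    | succ t ih =>
      set N := I ^ t • (⊤ : Submodule R M) with hN
      set N' := I ^ (t + 1) • (⊤ : Submodule R M) with hN'
      have hle : N' ≤ N :=
        Submodule.smul_mono_left (Ideal.pow_le_pow_right t.le_succ)
      set Nc := Submodule.comap N.subtype N' with hNc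
      have hker : LinearMap.ker (N'.mkQ ∘ₗ N.subtype) = Nc := by
        rw [LinearMap.ker_comp, Submodule.ker_mkQ]
      set f₀ : (↥N ⧸ Nc) →ₗ[R] M ⧸ N' :=
        Submodule.liftQ Nc (N'.mkQ ∘ₗ N.subtype) (le_of_eq hker.symm) with hf₀
      set g₀ : (M ⧸ N') →ₗ[R] M ⧸ N :=
        Submodule.mapQ N' N LinearMap.id (fun x hx => hle hx) with hg₀
      have hfinj : Function.Injective f₀ := by
        rw [← LinearMap.ker_eq_bot, hf₀, Submodule.ker_liftQ, hker]
        rw [eq_bot_iff]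
        rintro x ⟨y, hy, rfl⟩
        simp only [Submodule.mem_bot, Submodule.mkQ_apply, Submodule.Quotient.mk_eq_zero]
        exact hy
      have hgsurj : Function.Surjective g₀ := by
        intro z
        obtain ⟨m, rfl⟩ := N.mkQ_surjective z
        exact ⟨N'.mkQ m, by simp [hg₀, Submodule.mapQ_apply]⟩
      have hexact : Function.Exact f₀ g₀ := by
        rw [LinearMap.exact_iff]
        rw [hg₀, hf₀]
        rw [Submodule.range_liftQ]
        have h1 : LinearMap.ker (Submodule.mapQ N' N LinearMap.id (fun x hx => hle hx)) =
            N.map N'.mkQ := by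
          rw [Submodule.mapQ, Submodule.ker_liftQ, LinearMap.ker_comp, Submodule.ker_mkQ,
            Submodule.comap_id]
        rw [h1, LinearMap.range_comp, Submodule.range_subtype]
      exact auxFlat.extension (f₀.restrictScalars B) (g₀.restrictScalars B)
        hfinj hgsurj hexact (hgr t) ih
  refine ⟨part1, fun hsep => ?_⟩
  apply auxFlat.of_primes
  intro q hq
  rw [injective_iff_map_eq_zero]
  intro x hx
  have hxmem : ∀ t : ℕ, x ∈ I ^ t • (⊤ : Submodule R (M ⊗[B] ↥q)) := by
    intro t
    set N := I ^ t • (⊤ : Submodule R M) with hN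
    set π : M →ₗ[B] M ⧸ N := N.mkQ.restrictScalars B with hπ
    set ι : (↥N) →ₗ[B] M := N.subtype.restrictScalars B with hι
    have hexact : Function.Exact ι π := by
      intro m
      constructor
      · intro hm
        have : m ∈ N := (Submodule.Quotient.mk_eq_zero N).mp hm
        exact ⟨⟨m, this⟩, rfl⟩
      · rintro ⟨⟨n, hn⟩, rfl⟩
        exact (Submodule.Quotient.mk_eq_zero N).mpr hn
    have hsurj : Function.Surjective π := N.mkQ_surjective
    have hEx := rTensor_exact (↥q) hexact hsurj
    have h1 : LinearMap.rTensor (↥q) π x = 0 := by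
      haveI := part1 t
      refine (injective_iff_map_eq_zero _).mp
        (Module.Flat.lTensor_preserves_injective_linearMap (M := M ⧸ N) q.subtype
          q.injective_subtype) _ ?_
      rw [← LinearMap.comp_apply, LinearMap.lTensor_comp_rTensor,
        ← LinearMap.rTensor_comp_lTensor, LinearMap.comp_apply, hx, map_zero]
    obtain ⟨w, hw⟩ := (hEx x).mp h1
    rw [← hw]
    have key : ∀ w : (↥N) ⊗[B] (↥q),
        LinearMap.rTensor (↥q) ι w ∈ I ^ t • (⊤ : Submodule R (M ⊗[B] ↥q)) := by
      intro w
      induction w using TensorProduct.induction_on with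
      | zero => rw [map_zero]; exact Submodule.zero_mem _
      | tmul n a =>
        rw [LinearMap.rTensor_tmul]
        obtain ⟨m, hm⟩ := n
        have hι' : ι ⟨m, hm⟩ = m := rfl
        rw [hι']
        refine Submodule.smul_induction_on hm ?_ ?_
        · intro r hr n _
          rw [← TensorProduct.smul_tmul']
          exact Submodule.smul_mem_smul hr Submodule.mem_top
        · intro m1 m2 h1 h2
          rw [TensorProduct.add_tmul]
          exact Submodule.add_mem _ h1 h2
      | add u v hu hv =>
        rw [map_add]
        exact Submodule.add_mem _ hu hv
    exact key w
  have hbot : x ∈ (⊥ : Submodule R (M ⊗[B] ↥q)) := by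
    rw [← hsep q hq]
    exact Submodule.mem_iInf _ |>.mpr hxmem
  simpa using hbot
end

section
/- Let B be a ring and G^• a cochain complex of B-modules vanishing in degrees greater than some n. If every term G^i and every cohomology module H^i(G^•) is B-flat, then all cocycle modules Z^i and coboundary modules N^i are B-flat, and for every B-module L and every i, the natural map H^i(G^•) ⊗_B L → H^i(G^• ⊗_B L) is an isomorphism. -/
/-!
The complex splits into the short exact sequences `0 → Z^i → G^i → N^{i+1} → 0` and
`0 → N^i → Z^i → H^i → 0`. If `0 → A → M → C → 0` is exact with `C` flat, then
`A ⊗ L → M ⊗ L` is injective for every `L` (as `Tor₁(C, L) = 0`), so `A` is flat when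
`M` is. Since `N^i = 0` for `i > n`, descending induction makes every `N^i` and `Z^i`
flat. Both families of sequences then stay exact after tensoring with `L`: the injectivity
of `N^{i+1} ⊗ L → G^{i+1} ⊗ L` identifies `Z^i ⊗ L` with the kernel of `d ⊗ L`, and right
exactness identifies `H^i ⊗ L` with the quotient of `Z^i ⊗ L` by the image of `G^{i-1} ⊗ L`.
-/

open scoped TensorProduct
open LinearMap

universe u

section FlatQuotient

variable {R M : Type*} [CommRing R] [AddCommGroup M] [Module R M]

theorem Submodule.rTensor_subtype_injective_of_flat_quotient (A : Submodule R M)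
    [Module.Flat R (M ⧸ A)] (L : Type*) [AddCommGroup L] [Module R L] :
    Function.Injective (A.subtype.rTensor L) :=
  (lTensor_inj_iff_rTensor_inj L A.subtype).mp <|
    lTensor_injective_of_exact_of_flat A.mkQ A.mkQ_surjective A.subtype A.injective_subtype
      (exact_subtype_mkQ A) L

theorem Submodule.rTensor_subtype_injective_of_le {A B : Submodule R M} (hAB : A ≤ B)
    [Module.Flat R (M ⧸ B)] [Module.Flat R (B ⧸ A.comap B.subtype)]
    (L : Type*) [AddCommGroup L] [Module R L] :
    Function.Injective (A.subtype.rTensor L) := by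
  have hfac : A.subtype =
      B.subtype ∘ₗ (A.comap B.subtype).subtype ∘ₗ
        (Submodule.comapSubtypeEquivOfLe hAB).symm.toLinearMap := rfl
  rw [hfac, rTensor_comp, rTensor_comp, coe_comp, coe_comp]
  exact (B.rTensor_subtype_injective_of_flat_quotient L).comp <|
    ((A.comap B.subtype).rTensor_subtype_injective_of_flat_quotient L).comp <|
      (LinearEquiv.rTensor L (Submodule.comapSubtypeEquivOfLe hAB).symm).injective

theorem Module.Flat.submodule_of_flat_quotient [Module.Flat R M] (A : Submodule R M)
    [Module.Flat R (M ⧸ A)] : Module.Flat R A := by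
  rw [Module.Flat.iff_lTensor_preserves_injective_linearMap]
  intro N N' _ _ _ _ f hf
  have hsq : A.subtype.rTensor N' ∘ₗ f.lTensor A = f.lTensor M ∘ₗ A.subtype.rTensor N := by
    rw [rTensor_comp_lTensor, lTensor_comp_rTensor]
  refine Function.Injective.of_comp (f := A.subtype.rTensor N') ?_
  rw [← coe_comp, hsq, coe_comp]
  exact (Module.Flat.lTensor_preserves_injective_linearMap f hf).comp
    (A.rTensor_subtype_injective_of_flat_quotient N)

variable {N : Type*} [AddCommGroup N] [Module R N]

theorem Module.Flat.quotient_ker_of_flat_range (f : M →ₗ[R] N) [Module.Flat R (range f)] :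
    Module.Flat R (M ⧸ ker f) :=
  Module.Flat.of_linearEquiv f.quotKerEquivRange

theorem Module.Flat.ker_of_flat_range [Module.Flat R M] (f : M →ₗ[R] N)
    [Module.Flat R (range f)] : Module.Flat R (ker f) :=
  have := Module.Flat.quotient_ker_of_flat_range f
  Module.Flat.submodule_of_flat_quotient (ker f)

end FlatQuotient

section CohomologyBaseChange

variable {R M N P : Type*} [CommRing R] [AddCommGroup M] [Module R M] [AddCommGroup N]
  [Module R N] [AddCommGroup P] [Module R P] (f : M →ₗ[R] N) (g : N →ₗ[R] P)
  (L : Type*) [AddCommGroup L] [Module R L]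

theorem LinearMap.range_rTensor_ker_subtype
    (hB : Function.Injective ((range g).subtype.rTensor L)) :
    range ((ker g).subtype.rTensor L) = ker (g.rTensor L) := by
  have hexact : Function.Exact (ker g).subtype g.rangeRestrict :=
    exact_iff.mpr (by rw [ker_rangeRestrict, Submodule.range_subtype])
  have hfac : g.rTensor L = (range g).subtype.rTensor L ∘ₗ g.rangeRestrict.rTensor L := by
    rw [← rTensor_comp]; rfl
  rw [hfac, ker_comp_of_ker_eq_bot _ (ker_eq_bot.mpr hB)]
  exact (exact_iff.mp (rTensor_exact L hexact g.surjective_rangeRestrict)).symm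

variable {f g}

theorem LinearMap.range_rTensor_eq_of_range_eq {M' : Type*} [AddCommGroup M'] [Module R M']
    {f' : M' →ₗ[R] N} (h : range f = range f') :
    range (f.rTensor L) = range (f'.rTensor L) := by
  rw [rTensor_range (Q := L) (g := f), rTensor_range (Q := L) (g := f'), h]

theorem LinearMap.map_rTensor_ker_subtype_range_rTensor_comap (hfg : g ∘ₗ f = 0) :
    (range (((range f).comap (ker g).subtype).subtype.rTensor L)).map
        ((ker g).subtype.rTensor L) = range (f.rTensor L) := by
  have hrange :
      range ((ker g).subtype ∘ₗ ((range f).comap (ker g).subtype).subtype) = range f := by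
    rw [range_comp, Submodule.range_subtype, Submodule.map_comap_subtype,
      inf_eq_right.mpr (range_le_ker_iff.mpr hfg)]
  rw [← range_comp, ← rTensor_comp]
  exact range_rTensor_eq_of_range_eq L hrange

noncomputable def LinearMap.cohomologyRTensorEquiv (hfg : g ∘ₗ f = 0)
    (hZ : Function.Injective ((ker g).subtype.rTensor L))
    (hB : Function.Injective ((range g).subtype.rTensor L)) :
    ((ker g ⧸ (range f).comap (ker g).subtype) ⊗[R] L) ≃ₗ[R]
      (ker (g.rTensor L) ⧸ (range (f.rTensor L)).comap (ker (g.rTensor L)).subtype) :=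
  let e : (ker g ⊗[R] L) ≃ₗ[R] ker (g.rTensor L) :=
    LinearEquiv.ofInjective _ hZ ≪≫ₗ LinearEquiv.ofEq _ _ (range_rTensor_ker_subtype g L hB)
  have he : (ker (g.rTensor L)).subtype ∘ₗ e.toLinearMap = (ker g).subtype.rTensor L := rfl
  have hfg' : range (f.rTensor L) ≤ ker (g.rTensor L) := by
    rw [range_le_ker_iff, ← rTensor_comp, hfg, rTensor_zero]
  TensorProduct.quotientTensorEquiv L _ ≪≫ₗ
    Submodule.Quotient.equiv _ _ e (Submodule.map_injective_of_injective
      (ker (g.rTensor L)).injective_subtype <| by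
        rw [← Submodule.map_comp, he, Submodule.map_comap_subtype, inf_eq_right.mpr hfg']
        exact map_rTensor_ker_subtype_range_rTensor_comap L hfg)

theorem LinearMap.cohomologyRTensorEquiv_mk_tmul (hfg : g ∘ₗ f = 0)
    (hZ : Function.Injective ((ker g).subtype.rTensor L))
    (hB : Function.Injective ((range g).subtype.rTensor L)) (z : ker g) (l : L)
    (hzl : (z : N) ⊗ₜ[R] l ∈ ker (g.rTensor L)) :
    cohomologyRTensorEquiv L hfg hZ hB (Submodule.Quotient.mk z ⊗ₜ l) =
      Submodule.Quotient.mk ⟨_, hzl⟩ :=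
  rfl

end CohomologyBaseChange

section Complex

variable {R : Type*} [CommRing R] {G : ℤ → Type*} [∀ i, AddCommGroup (G i)]
  [∀ i, Module R (G i)] {d : ∀ i : ℤ, G i →ₗ[R] G (i + 1)}

theorem flat_range_of_flat_cohomology (hdd : ∀ i : ℤ, d (i + 1) ∘ₗ d i = 0) (n : ℤ)
    (hvanish : ∀ i : ℤ, n < i → Subsingleton (G i))
    (hflatG : ∀ i : ℤ, Module.Flat R (G i))
    (hflatH : ∀ i : ℤ, Module.Flat R
      (ker (d (i + 1)) ⧸ (range (d i)).comap (ker (d (i + 1))).subtype)) (i : ℤ) :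
    Module.Flat R (range (d i)) := by
  suffices h : ∀ k : ℕ, ∀ i : ℤ, n ≤ i + k → Module.Flat R (range (d i)) from
    h (n - i).toNat i (by omega)
  intro k
  induction k with
  | zero =>
    intro i hi
    have : Subsingleton (G (i + 1)) := hvanish _ (by omega)
    infer_instance
  | succ k ih =>
    intro i hi
    have := hflatG (i + 1)
    have := ih (i + 1) (by push_cast at hi; omega)
    have := Module.Flat.ker_of_flat_range (d (i + 1))
    have := hflatH i
    have := Module.Flat.submodule_of_flat_quotient ((range (d i)).comap (ker (d (i + 1))).subtype)
    exact Module.Flat.of_linearEquiv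
      (Submodule.comapSubtypeEquivOfLe (range_le_ker_iff.mpr (hdd i))).symm

end Complex

theorem flat_complex_base_change
    (B : Type u) [CommRing B] (n : ℤ)
    (G : ℤ → Type u) [∀ i, AddCommGroup (G i)] [∀ i, Module B (G i)]
    (d : ∀ i : ℤ, G i →ₗ[B] G (i + 1))
    (hdd : ∀ i : ℤ, (d (i + 1)).comp (d i) = 0)
    (hvanish : ∀ i : ℤ, n < i → Subsingleton (G i))
    (hflatG : ∀ i : ℤ, Module.Flat B (G i))
    (hflatH : ∀ i : ℤ, Module.Flat B
      (↥(LinearMap.ker (d (i + 1))) ⧸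
        Submodule.comap (LinearMap.ker (d (i + 1))).subtype (LinearMap.range (d i)))) :
    (∀ i : ℤ, Module.Flat B ↥(LinearMap.ker (d i)) ∧
        Module.Flat B ↥(LinearMap.range (d i))) ∧
    (∀ (L : Type u) [AddCommGroup L] [Module B L], ∀ i : ℤ,
      ∃ e : ((↥(LinearMap.ker (d (i + 1))) ⧸
            Submodule.comap (LinearMap.ker (d (i + 1))).subtype
              (LinearMap.range (d i))) ⊗[B] L)
          ≃ₗ[B]
          (↥(LinearMap.ker (LinearMap.rTensor L (d (i + 1)))) ⧸
            Submodule.comap (LinearMap.ker (LinearMap.rTensor L (d (i + 1)))).subtype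
              (LinearMap.range (LinearMap.rTensor L (d i)))),
        ∀ (z : ↥(LinearMap.ker (d (i + 1)))) (l : L)
          (hzl : (z : G (i + 1)) ⊗ₜ[B] l ∈ LinearMap.ker (LinearMap.rTensor L (d (i + 1)))),
          e ((Submodule.Quotient.mk z) ⊗ₜ[B] l) = Submodule.Quotient.mk ⟨_, hzl⟩) := by
  have hflatN := flat_range_of_flat_cohomology hdd n hvanish hflatG hflatH
  refine ⟨fun i => ⟨?_, hflatN i⟩, fun L _ _ i => ?_⟩
  · have := hflatG i
    have := hflatN i
    exact Module.Flat.ker_of_flat_range (d i)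
  have := hflatN (i + 1)
  have := Module.Flat.quotient_ker_of_flat_range (d (i + 1))
  have := hflatN (i + 1 + 1)
  have := Module.Flat.quotient_ker_of_flat_range (d (i + 1 + 1))
  have := hflatH (i + 1)
  have hZ := (ker (d (i + 1))).rTensor_subtype_injective_of_flat_quotient L
  have hB := Submodule.rTensor_subtype_injective_of_le (range_le_ker_iff.mpr (hdd (i + 1))) L
  exact ⟨cohomologyRTensorEquiv L (hdd i) hZ hB, cohomologyRTensorEquiv_mk_tmul L (hdd i) hZ hB⟩
end

section
/- Let R be a ring and 𝔓 a proper ideal of R. If 0 → M' → M → M'' → 0 is an exact sequence of R-modules with M and M'' both (R∖∖𝔓)-pseudoflat, then M' is (R∖∖𝔓)-pseudoflat. Similarly, if M' and M'' are (R∖∖𝔓)-pseudoflat then so is M. -/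
/-!
STATEMENT 6.  (R∖∖𝔓)-pseudoflat modules and short exact sequences.
An `R`-module `N` is `(R∖∖𝔓)`-pseudoflat if for every flat `R`-algebra `R'`,
every sequence of elements of `R'` which is a possibly improper regular
sequence (= weakly regular sequence) on `R'/𝔓R'` is a possibly improper regular
sequence on `R' ⊗_R N`.  If `0 → M' → M → M'' → 0` is exact with `M, M''`
pseudoflat then `M'` is pseudoflat; if `M', M''` are pseudoflat then so is `M`.
-/

open scoped TensorProduct

universe u

/-- `(R∖∖𝔓)`-pseudoflat. -/
def Pseudoflat {R : Type u} [CommRing R] (𝔓 : Ideal R)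
    (N : Type u) [AddCommGroup N] [Module R N] : Prop :=
  ∀ (R' : Type u) [CommRing R'] [Algebra R R'], Module.Flat R R' →
    ∀ ys : List R',
      RingTheory.Sequence.IsWeaklyRegular (R' ⧸ 𝔓.map (algebraMap R R')) ys →
      RingTheory.Sequence.IsWeaklyRegular (R' ⊗[R] N) ys

open RingTheory.Sequence Function in
/-- Two-of-three for weakly regular sequences on a short exact sequence,
given that the sequence is weakly regular on the quotient. -/
lemma weaklyRegular_two_of_three {S : Type*} [CommRing S]
    {A B C : Type*} [AddCommGroup A] [Module S A] [AddCommGroup B] [Module S B]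
    [AddCommGroup C] [Module S C]
    (f : A →ₗ[S] B) (g : B →ₗ[S] C) (hf : Injective f) (hg : Surjective g)
    (hfg : Exact f g) (ys : List S) (hC : IsWeaklyRegular C ys) :
    (IsWeaklyRegular B ys → IsWeaklyRegular A ys) ∧
    (IsWeaklyRegular A ys → IsWeaklyRegular B ys) := by
  induction ys generalizing A B C with
  | nil => exact ⟨fun _ => .nil S A, fun _ => .nil S B⟩
  | cons y ys ih =>
    rw [isWeaklyRegular_cons_iff] at hC
    obtain ⟨hC1, hC2⟩ := hC
    -- exactness `0 → A/yA → B/yB` :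
    have hzero : Exact (0 : A →ₗ[S] A) f :=
      LinearMap.exact_iff.mpr (by rw [LinearMap.range_zero, LinearMap.ker_eq_bot.mpr hf])
    have hq0 : Exact (QuotSMulTop.map y (0 : A →ₗ[S] A)) (QuotSMulTop.map y f) :=
      QuotSMulTop.map_first_exact_on_four_term_exact_of_isSMulRegular_last hzero hfg hC1
    have hqinj : Injective (QuotSMulTop.map y f) := by
      rw [← LinearMap.ker_eq_bot, hq0.linearMap_ker_eq]
      rw [map_zero]
      exact LinearMap.range_zero
    have hqsurj : Surjective (QuotSMulTop.map y g) := QuotSMulTop.map_surjective y hg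
    have hqexact : Exact (QuotSMulTop.map y f) (QuotSMulTop.map y g) :=
      QuotSMulTop.map_exact y hfg hg
    obtain ⟨ih1, ih2⟩ := ih (QuotSMulTop.map y f) (QuotSMulTop.map y g)
      hqinj hqsurj hqexact hC2
    constructor
    · intro hB
      rw [isWeaklyRegular_cons_iff] at hB ⊢
      exact ⟨hB.1.of_injective f hf, ih1 hB.2⟩
    · intro hA
      rw [isWeaklyRegular_cons_iff] at hA ⊢
      refine ⟨?_, ih2 hA.2⟩
      exact isSMulRegular_of_range_eq_ker hf (hfg.linearMap_ker_eq).symm hA.1 hC1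

theorem pseudoflat_two_of_three
    {R : Type u} [CommRing R] (𝔓 : Ideal R) (h𝔓 : 𝔓 ≠ ⊤)
    (M' M M'' : Type u)
    [AddCommGroup M'] [Module R M'] [AddCommGroup M] [Module R M]
    [AddCommGroup M''] [Module R M'']
    (f : M' →ₗ[R] M) (g : M →ₗ[R] M'')
    (hf : Function.Injective f) (hg : Function.Surjective g)
    (hfg : Function.Exact f g) :
    ((Pseudoflat 𝔓 M ∧ Pseudoflat 𝔓 M'') → Pseudoflat 𝔓 M') ∧
    ((Pseudoflat 𝔓 M' ∧ Pseudoflat 𝔓 M'') → Pseudoflat 𝔓 M) := by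
  have key : ∀ (R' : Type u) [CommRing R'] [Algebra R R'], Module.Flat R R' →
      ∀ ys : List R', RingTheory.Sequence.IsWeaklyRegular (R' ⊗[R] M'') ys →
      (RingTheory.Sequence.IsWeaklyRegular (R' ⊗[R] M) ys →
        RingTheory.Sequence.IsWeaklyRegular (R' ⊗[R] M') ys) ∧
      (RingTheory.Sequence.IsWeaklyRegular (R' ⊗[R] M') ys →
        RingTheory.Sequence.IsWeaklyRegular (R' ⊗[R] M) ys) := by
    intro R' _ _ hflat ys hC
    haveI := hflat
    have hinj : Function.Injective (f.baseChange R') := by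
      show Function.Injective (f.lTensor R')
      exact Module.Flat.lTensor_preserves_injective_linearMap f hf
    have hsurj : Function.Surjective (g.baseChange R') := by
      show Function.Surjective (g.lTensor R')
      exact LinearMap.lTensor_surjective R' hg
    have hexact : Function.Exact (f.baseChange R') (g.baseChange R') := by
      show Function.Exact (f.lTensor R') (g.lTensor R')
      exact lTensor_exact R' hfg hg
    exact weaklyRegular_two_of_three (f.baseChange R') (g.baseChange R')
      hinj hsurj hexact ys hC
  constructor
  · rintro ⟨hM, hM''⟩ R' _ _ hflat ys hys
    exact (key R' hflat ys (hM'' R' hflat ys hys)).1 (hM R' hflat ys hys)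
  · rintro ⟨hM', hM''⟩ R' _ _ hflat ys hys
    exact (key R' hflat ys (hM'' R' hflat ys hys)).2 (hM' R' hflat ys hys)
end

section
/- Let R be a ring, 𝔓 a proper ideal, R' a flat R-algebra, and y_1,…,y_d elements of R' whose images form a possibly improper regular sequence on R'/𝔓R'. If 0 → M' → M → M'' → 0 is an exact sequence of R-modules with M'' being (R∖∖𝔓)-pseudoflat, then for every t ∈ ℕ the sequence 0 → M'⊗R'/(y_1^t,…,y_d^t)(M'⊗R') → M⊗R'/(y^t)(M⊗R') → M''⊗R'/(y^t)(M''⊗R') → 0 is exact, and the induced sequence 0 → H^d_{(y)}(M'⊗_R R') → H^d_{(y)}(M⊗_R R') → H^d_{(y)}(M''⊗_R R') → 0 of top local cohomology modules is exact. -/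
/-!
Flat base change keeps `0 → M' ⊗ R' → M ⊗ R' → M'' ⊗ R' → 0` exact. Powers of a weakly regular
sequence are weakly regular (for `r` regular, `N/rN ↪ N/r^(k+1)N ↠ N/r^kN` is an extension, and
weak regularity passes to extensions), so `y₁ᵗ, …, y_dᵗ` is weakly regular on `R'/𝔓R'`, hence on
`M'' ⊗ R'` by pseudoflatness. A short exact sequence whose right end carries a weakly regular
sequence `z` stays short exact after reducing modulo `(z)`; this gives the sequences at level `t`.
A class `[x; t]` of the colimit vanishes when `(∏ y)^s • x` lies in the level-`(t + s)` submodule,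
so the statements about `H^d` are the level-`(t + s)` statements applied to `(∏ y)^s • x`.
-/

open scoped TensorProduct

universe u

section

open Submodule Function Pointwise

variable {A : Type*} [CommRing A]
variable {N' N N'' : Type*} [AddCommGroup N'] [Module A N'] [AddCommGroup N] [Module A N]
  [AddCommGroup N''] [Module A N'']

lemma exists_sub_mem_smul_top_of_map_mem_smul_top {f : N' →ₗ[A] N} {g : N →ₗ[A] N''}
    (hfg : Exact f g) (hg : Surjective g) (I : Ideal A) {x : N}
    (hx : g x ∈ I • (⊤ : Submodule A N'')) : ∃ x', x - f x' ∈ I • (⊤ : Submodule A N) := by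
  rw [← LinearMap.range_eq_top.mpr hg, ← Submodule.map_top, ← map_smul''] at hx
  obtain ⟨w, hw, hgw⟩ := hx
  obtain ⟨x', hx'⟩ := (hfg (x - w)).mp (by rw [map_sub, hgw, sub_self])
  exact ⟨x', by rwa [hx', sub_sub_cancel]⟩

namespace RingTheory.Sequence

lemma isWeaklyRegular_of_subsingleton [Subsingleton N] (rs : List A) :
    IsWeaklyRegular N rs := by
  rw [isWeaklyRegular_iff]
  intro i _
  have := (mkQ_surjective (Ideal.ofList (rs.take i) • ⊤ : Submodule A N)).subsingleton
  exact fun a b _ => Subsingleton.elim a b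

lemma IsWeaklyRegular.of_exact {rs : List A} {f : N' →ₗ[A] N} {g : N →ₗ[A] N''}
    (hf : Injective f) (hfg : Exact f g) (hg : Surjective g)
    (h' : IsWeaklyRegular N' rs) (h'' : IsWeaklyRegular N'' rs) : IsWeaklyRegular N rs := by
  induction rs generalizing N' N N'' with
  | nil => exact .nil A N
  | cons r rs ih =>
    rw [isWeaklyRegular_cons_iff] at h' h'' ⊢
    refine ⟨isSMulRegular_of_range_eq_ker hf hfg.linearMap_ker_eq.symm h'.1 h''.1, ?_⟩
    have hf_r : Injective (QuotSMulTop.map r f) := by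
      have := QuotSMulTop.map_first_exact_on_four_term_exact_of_isSMulRegular_last
        ((LinearMap.exact_zero_iff_injective N' f).mpr hf) hfg h''.1
      rwa [map_zero, LinearMap.exact_zero_iff_injective] at this
    exact ih hf_r (QuotSMulTop.map_exact r hfg hg) (QuotSMulTop.map_surjective r hg) h'.2 h''.2

lemma QuotSMulTop.exists_exact_pow {r : A} (hr : IsSMulRegular N r) (k : ℕ) :
    ∃ (ι : QuotSMulTop r N →ₗ[A] QuotSMulTop (r ^ (k + 1)) N)
      (π : QuotSMulTop (r ^ (k + 1)) N →ₗ[A] QuotSMulTop (r ^ k) N),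
      Injective ι ∧ Exact ι π ∧ Surjective π := by
  have hι : (r • ⊤ : Submodule A N) ≤
      comap (LinearMap.lsmul A N (r ^ k)) ((r ^ (k + 1)) • ⊤) := by
    rintro _ ⟨m, -, rfl⟩
    exact ⟨m, trivial, by simp [pow_succ, mul_smul, smul_comm r]⟩
  have hπ : ((r ^ (k + 1)) • ⊤ : Submodule A N) ≤ (r ^ k) • ⊤ := by
    rintro _ ⟨m, -, rfl⟩
    exact ⟨r • m, trivial, by simp [pow_succ, mul_smul, smul_comm r]⟩
  refine ⟨mapQ _ _ _ hι, factor hπ, ?_, ?_, factor_surjective hπ⟩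
  · refine (injective_iff_map_eq_zero _).mpr fun q hq => ?_
    obtain ⟨m, rfl⟩ := mkQ_surjective _ q
    obtain ⟨n, -, hn⟩ := (mem_smul_pointwise_iff_exists _ _ _).mp
      ((Submodule.Quotient.mk_eq_zero _).mp hq)
    have hrn : r • n = m := (hr.pow k) (by simpa [pow_succ, mul_smul] using hn)
    exact (Submodule.Quotient.mk_eq_zero _).mpr (hrn ▸ smul_mem_pointwise_smul n r ⊤ trivial)
  · intro q
    obtain ⟨x, rfl⟩ := mkQ_surjective _ q
    rw [factor_mk, mkQ_apply, Submodule.Quotient.mk_eq_zero, mem_smul_pointwise_iff_exists]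
    constructor
    · rintro ⟨m, -, rfl⟩
      exact ⟨mkQ _ m, rfl⟩
    · rintro ⟨q', hq'⟩
      obtain ⟨m, rfl⟩ := mkQ_surjective _ q'
      have hx : r ^ k • m - x ∈ ((r ^ k) • ⊤ : Submodule A N) :=
        hπ ((Submodule.Quotient.eq _).mp hq')
      obtain ⟨n, -, hn⟩ := (mem_smul_pointwise_iff_exists _ _ _).mp
        (sub_mem (smul_mem_pointwise_smul m _ ⊤ trivial) hx)
      exact ⟨n, trivial, by rw [hn, sub_sub_cancel]⟩

lemma isWeaklyRegular_quotSMulTop_pow {r : A} (hr : IsSMulRegular N r) {rs : List A}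
    (h : IsWeaklyRegular (QuotSMulTop r N) rs) (k : ℕ) :
    IsWeaklyRegular (QuotSMulTop (r ^ k) N) rs := by
  induction k with
  | zero =>
    have : Subsingleton (QuotSMulTop (r ^ 0) N) := by
      rw [Submodule.Quotient.subsingleton_iff, pow_zero, one_smul]
    exact isWeaklyRegular_of_subsingleton rs
  | succ k ih =>
    obtain ⟨ι, π, hι, hιπ, hπ⟩ := QuotSMulTop.exists_exact_pow hr k
    exact h.of_exact hι hιπ hπ ih

lemma IsWeaklyRegular.map_pow {rs : List A} (h : IsWeaklyRegular N rs) (t : ℕ) :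
    IsWeaklyRegular N (rs.map (· ^ t)) := by
  induction rs generalizing N with
  | nil => exact .nil A N
  | cons r rs ih =>
    rw [isWeaklyRegular_cons_iff] at h
    exact .cons (h.1.pow t) (isWeaklyRegular_quotSMulTop_pow h.1 (ih h.2) t)

lemma mem_smul_top_of_map_mem_smul_top {f : N' →ₗ[A] N} {g : N →ₗ[A] N''}
    (hf : Injective f) (hfg : Exact f g) (hg : Surjective g) {rs : List A}
    (h : IsWeaklyRegular N'' rs) {x : N'} (hx : f x ∈ Ideal.ofList rs • (⊤ : Submodule A N)) :
    x ∈ Ideal.ofList rs • (⊤ : Submodule A N') := by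
  have hexact := map_first_exact_on_four_term_right_exact_of_isSMulRegular_last
    ((LinearMap.exact_zero_iff_injective N' f).mpr hf) hfg hg h
  rw [mapQ_zero, LinearMap.exact_zero_iff_injective] at hexact
  rw [← Submodule.Quotient.mk_eq_zero] at hx ⊢
  exact hexact (hx.trans (map_zero _).symm)

end RingTheory.Sequence

end

open Function in
lemma shortExact_baseChange_of_flat {R : Type*} [CommRing R] (R' : Type*) [CommRing R']
    [Algebra R R'] [Module.Flat R R'] {M' M M'' : Type*} [AddCommGroup M'] [Module R M']
    [AddCommGroup M] [Module R M] [AddCommGroup M''] [Module R M'']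
    {f : M' →ₗ[R] M} {g : M →ₗ[R] M''} (hf : Injective f) (hfg : Exact f g) (hg : Surjective g) :
    Injective (f.baseChange R') ∧ Exact (f.baseChange R') (g.baseChange R') ∧
      Surjective (g.baseChange R') := by
  simp only [LinearMap.baseChange_eq_ltensor]
  exact ⟨Module.Flat.lTensor_preserves_injective_linearMap f hf, lTensor_exact R' hfg hg,
    LinearMap.lTensor_surjective R' hg⟩

theorem pseudoflat_quotients_and_top_localCohomology_exact_general
    {R : Type u} [CommRing R] (𝔓 : Ideal R)
    (R' : Type u) [CommRing R'] [Algebra R R'] [Module.Flat R R']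
    (d : ℕ) (y : Fin d → R')
    (hy : RingTheory.Sequence.IsWeaklyRegular
      (R' ⧸ 𝔓.map (algebraMap R R')) (List.ofFn y))
    (M' M M'' : Type u)
    [AddCommGroup M'] [Module R M'] [AddCommGroup M] [Module R M]
    [AddCommGroup M''] [Module R M'']
    (f : M' →ₗ[R] M) (g : M →ₗ[R] M'')
    (hf : Function.Injective f) (hg : Function.Surjective g)
    (hfg : Function.Exact f g)
    (hM'' : Pseudoflat 𝔓 M'') :
    -- notation: `J t` is the ideal `(y₁ᵗ,…,y_dᵗ)`, `c = y₁⋯y_d`,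
    -- `f' = f ⊗ R'`, `g' = g ⊗ R'`
    (let J : ℕ → Ideal R' := fun t => Ideal.span (Set.range fun i => y i ^ t)
     let f' := LinearMap.baseChange R' f
     let g' := LinearMap.baseChange R' g
     let c : R' := ∏ i, y i
     -- (∗_t): exactness of 0 → M'⊗R'/(yᵗ) → M⊗R'/(yᵗ) → M''⊗R'/(yᵗ) → 0
     (∀ t : ℕ,
       (∀ x' : R' ⊗[R] M',
          f' x' ∈ J t • (⊤ : Submodule R' (R' ⊗[R] M)) →
          x' ∈ J t • (⊤ : Submodule R' (R' ⊗[R] M'))) ∧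
       (∀ x : R' ⊗[R] M,
          g' x ∈ J t • (⊤ : Submodule R' (R' ⊗[R] M'')) →
          ∃ x' : R' ⊗[R] M', x - f' x' ∈ J t • (⊤ : Submodule R' (R' ⊗[R] M))) ∧
       (∀ x'' : R' ⊗[R] M'', ∃ x : R' ⊗[R] M,
          g' x - x'' ∈ J t • (⊤ : Submodule R' (R' ⊗[R] M'')))) ∧
     -- (∗∗): exactness of 0 → H^d_{(y)}(M'⊗R') → H^d_{(y)}(M⊗R') → H^d_{(y)}(M''⊗R') → 0,
     -- expressed element-wise in the colimit description of H^d
     (∀ (t : ℕ) (x' : R' ⊗[R] M'),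
        (∃ s : ℕ, (c ^ s) • f' x' ∈ J (t + s) • (⊤ : Submodule R' (R' ⊗[R] M))) →
        (∃ s : ℕ, (c ^ s) • x' ∈ J (t + s) • (⊤ : Submodule R' (R' ⊗[R] M')))) ∧
     (∀ (t : ℕ) (x : R' ⊗[R] M),
        (∃ s : ℕ, (c ^ s) • g' x ∈ J (t + s) • (⊤ : Submodule R' (R' ⊗[R] M''))) →
        (∃ (s : ℕ) (x' : R' ⊗[R] M'),
          (c ^ s) • x - f' x' ∈ J (t + s) • (⊤ : Submodule R' (R' ⊗[R] M)))) ∧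
     (∀ (t : ℕ) (x'' : R' ⊗[R] M''), ∃ (s : ℕ) (x : R' ⊗[R] M),
        g' x - (c ^ s) • x'' ∈ J (t + s) • (⊤ : Submodule R' (R' ⊗[R] M'')))) := by
  intro J f' g' c
  obtain ⟨hf', hfg', hg'⟩ := shortExact_baseChange_of_flat R' hf hfg hg
  have hJ (t : ℕ) : J t = Ideal.ofList (List.ofFn fun i => y i ^ t) :=
    congrArg Ideal.span (Set.ext fun a => (List.mem_ofFn' _ a).symm)
  have hreg (t : ℕ) :
      RingTheory.Sequence.IsWeaklyRegular (R' ⊗[R] M'') (List.ofFn fun i => y i ^ t) :=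
    hM'' R' inferInstance _ (by simpa only [List.map_ofFn, Function.comp_def] using hy.map_pow t)
  have inj (t : ℕ) (x' : R' ⊗[R] M') (hx : f' x' ∈ J t • (⊤ : Submodule R' (R' ⊗[R] M))) :
      x' ∈ J t • (⊤ : Submodule R' (R' ⊗[R] M')) := by
    rw [hJ] at hx ⊢
    exact RingTheory.Sequence.mem_smul_top_of_map_mem_smul_top hf' hfg' hg' (hreg t) hx
  have mid (t : ℕ) (x : R' ⊗[R] M) :
      g' x ∈ J t • (⊤ : Submodule R' (R' ⊗[R] M'')) →
        ∃ x', x - f' x' ∈ J t • (⊤ : Submodule R' (R' ⊗[R] M)) :=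
    exists_sub_mem_smul_top_of_map_mem_smul_top hfg' hg' (J t)
  have surj (t : ℕ) (x'' : R' ⊗[R] M'') :
      ∃ x, g' x - x'' ∈ J t • (⊤ : Submodule R' (R' ⊗[R] M'')) := by
    obtain ⟨x, rfl⟩ := hg' x''
    exact ⟨x, by rw [sub_self]; exact zero_mem _⟩
  refine ⟨fun t => ⟨inj t, mid t, surj t⟩, ?_, ?_, ?_⟩
  · rintro t x' ⟨s, hs⟩
    exact ⟨s, inj (t + s) _ (by rwa [map_smul])⟩
  · rintro t x ⟨s, hs⟩
    exact ⟨s, mid (t + s) _ (by rwa [map_smul])⟩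
  · intro t x''
    obtain ⟨x, hx⟩ := surj t x''
    exact ⟨0, x, by rwa [pow_zero, one_smul]⟩

theorem pseudoflat_quotients_and_top_localCohomology_exact
    {R : Type u} [CommRing R] (𝔓 : Ideal R) (h𝔓 : 𝔓 ≠ ⊤)
    (R' : Type u) [CommRing R'] [Algebra R R'] [Module.Flat R R']
    (d : ℕ) (y : Fin d → R')
    (hy : RingTheory.Sequence.IsWeaklyRegular
      (R' ⧸ 𝔓.map (algebraMap R R')) (List.ofFn y))
    (M' M M'' : Type u)
    [AddCommGroup M'] [Module R M'] [AddCommGroup M] [Module R M]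
    [AddCommGroup M''] [Module R M'']
    (f : M' →ₗ[R] M) (g : M →ₗ[R] M'')
    (hf : Function.Injective f) (hg : Function.Surjective g)
    (hfg : Function.Exact f g)
    (hM'' : Pseudoflat 𝔓 M'') :
    -- notation: `J t` is the ideal `(y₁ᵗ,…,y_dᵗ)`, `c = y₁⋯y_d`,
    -- `f' = f ⊗ R'`, `g' = g ⊗ R'`
    (let J : ℕ → Ideal R' := fun t => Ideal.span (Set.range fun i => y i ^ t)
     let f' := LinearMap.baseChange R' f
     let g' := LinearMap.baseChange R' g
     let c : R' := ∏ i, y i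
     -- (∗_t): exactness of 0 → M'⊗R'/(yᵗ) → M⊗R'/(yᵗ) → M''⊗R'/(yᵗ) → 0
     (∀ t : ℕ,
       (∀ x' : R' ⊗[R] M',
          f' x' ∈ J t • (⊤ : Submodule R' (R' ⊗[R] M)) →
          x' ∈ J t • (⊤ : Submodule R' (R' ⊗[R] M'))) ∧
       (∀ x : R' ⊗[R] M,
          g' x ∈ J t • (⊤ : Submodule R' (R' ⊗[R] M'')) →
          ∃ x' : R' ⊗[R] M', x - f' x' ∈ J t • (⊤ : Submodule R' (R' ⊗[R] M))) ∧
       (∀ x'' : R' ⊗[R] M'', ∃ x : R' ⊗[R] M,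
          g' x - x'' ∈ J t • (⊤ : Submodule R' (R' ⊗[R] M'')))) ∧
     -- (∗∗): exactness of 0 → H^d_{(y)}(M'⊗R') → H^d_{(y)}(M⊗R') → H^d_{(y)}(M''⊗R') → 0,
     -- expressed element-wise in the colimit description of H^d
     (∀ (t : ℕ) (x' : R' ⊗[R] M'),
        (∃ s : ℕ, (c ^ s) • f' x' ∈ J (t + s) • (⊤ : Submodule R' (R' ⊗[R] M))) →
        (∃ s : ℕ, (c ^ s) • x' ∈ J (t + s) • (⊤ : Submodule R' (R' ⊗[R] M')))) ∧
     (∀ (t : ℕ) (x : R' ⊗[R] M),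
        (∃ s : ℕ, (c ^ s) • g' x ∈ J (t + s) • (⊤ : Submodule R' (R' ⊗[R] M''))) →
        (∃ (s : ℕ) (x' : R' ⊗[R] M'),
          (c ^ s) • x - f' x' ∈ J (t + s) • (⊤ : Submodule R' (R' ⊗[R] M)))) ∧
     (∀ (t : ℕ) (x'' : R' ⊗[R] M''), ∃ (s : ℕ) (x : R' ⊗[R] M),
        g' x - (c ^ s) • x'' ∈ J (t + s) • (⊤ : Submodule R' (R' ⊗[R] M'')))) :=
  pseudoflat_quotients_and_top_localCohomology_exact_general 𝔓 R' d y hy M' M M'' f g hf hg hfg hM''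
end

section
/- Let R be a ring, 𝔓 a proper ideal, M an R-module, and u ∈ M such that both M and M/Ru are (R∖∖𝔓)-pseudoflat. Let R' be a flat R-algebra and y_1,…,y_d ∈ R' whose images form a possibly improper regular sequence on R'/𝔓R'. Then the annihilator in R' of the class [u ⊗ 1; y] of u in H^d_{(y)}(M ⊗_R R') equals Ann_R(u)·R' + (y_1,…,y_d)R'. -/
/-!
STATEMENT 10.  `𝔓` a proper ideal of `R`, `M` an `R`-module, `u ∈ M` with `M`
and `M/Ru` both `(R∖∖𝔓)`-pseudoflat, `R'` a flat `R`-algebra, and `y₁,…,y_d`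
elements of `R'` whose images form a possibly improper (weakly) regular
sequence on `R'/𝔓R'`.  Then the annihilator in `R'` of the class
`[u ⊗ 1; y] ∈ H^d_{(y)}(M ⊗_R R')` equals `Ann_R(u)·R' + (y₁,…,y_d)R'`.
Here `H^d_{(y)}(N) = colim_t N/(y₁ᵗ,…,y_dᵗ)N` with transition maps given by
multiplication by `y₁⋯y_d`, so `r` annihilates `[u⊗1; y]` iff for some `t`,
`((y₁⋯y_d)ᵗ · r) • (1 ⊗ u) ∈ (y₁^{t+1},…,y_d^{t+1})·(R' ⊗_R M)`.
-/

open scoped TensorProduct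

universe u

/-!
Put `N = R' ⊗ M` and `e = 1 ⊗ u`. By pseudoflatness `y` is weakly regular on `N` and on
`R' ⊗ (M/Ru) = N/R'e`. Regularity on `N` makes multiplication by `y₁⋯y_d` injective from
`N/(yᵗ)N` to `N/(y^{t+1})N`, so `r` kills `[e; y]` iff `re ∈ (y)N`. Regularity on `N/R'e`
gives `(y)N ∩ R'e = (y)·e`, so `re = se` with `s ∈ (y)`; then `r - s` kills `e`, and by
flatness the annihilator of `e` is `Ann_R(u)R'`.
-/

open scoped Pointwise

open Submodule

namespace Submodule

variable {S : Type*} [CommRing S] {N : Type*} [AddCommGroup N] [Module S N]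

lemma mem_smul_top_iff_exists_smul_eq {a : S} {m : N} :
    m ∈ a • (⊤ : Submodule S N) ↔ ∃ b, a • b = m := by
  simp [mem_smul_pointwise_iff_exists]

lemma mkQ_mem_smul_top_iff {K : Submodule S N} {I : Ideal S} {x : N} :
    K.mkQ x ∈ I • (⊤ : Submodule S (N ⧸ K)) ↔
      x ∈ I • (⊤ : Submodule S N) ⊔ K := by
  rw [← mem_comap, comap_smul_top_of_surjective I K.mkQ K.mkQ_surjective, ker_mkQ]

lemma ofList_smul_top_mono {l₁ l₂ : List S} (h : l₁ ⊆ l₂) :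
    Ideal.ofList l₁ • (⊤ : Submodule S N) ≤ Ideal.ofList l₂ • ⊤ :=
  smul_mono_left (Ideal.span_mono h)

lemma smul_mem_ofList_smul_top {a : S} {l : List S} (ha : a ∈ l) (m : N) :
    a • m ∈ Ideal.ofList l • (⊤ : Submodule S N) :=
  smul_mem_smul (subset_span ha) mem_top

lemma mem_ofList_cons_smul_top_iff {z : S} {l : List S} {x : N} :
    x ∈ Ideal.ofList (z :: l) • (⊤ : Submodule S N) ↔
      ∃ c, x - z • c ∈ Ideal.ofList l • (⊤ : Submodule S N) := by
  simp only [Ideal.ofList_cons, sup_smul, ideal_span_singleton_smul, mem_sup,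
    mem_smul_top_iff_exists_smul_eq]
  constructor
  · rintro ⟨_, ⟨c, rfl⟩, b, hb, rfl⟩
    exact ⟨c, by simpa using hb⟩
  · rintro ⟨c, hc⟩
    exact ⟨_, ⟨c, rfl⟩, _, hc, add_sub_cancel _ _⟩

lemma mem_ofList_concat_smul_top_iff {z : S} {l : List S} {x : N} :
    x ∈ Ideal.ofList (l ++ [z]) • (⊤ : Submodule S N) ↔
      ∃ c, x - z • c ∈ Ideal.ofList l • (⊤ : Submodule S N) := by
  rw [Ideal.ofList_append, Ideal.ofList_singleton, sup_comm, ← Ideal.ofList_cons]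
  exact mem_ofList_cons_smul_top_iff

end Submodule

namespace Ideal

variable {S : Type*} [CommRing S]

lemma ofList_ofFn {n : ℕ} (f : Fin n → S) : ofList (List.ofFn f) = span (Set.range f) :=
  congrArg span (Set.ext (List.mem_ofFn' f))

lemma ofList_pow_succ_cons_le (z : S) (l : List S) (n : ℕ) :
    ofList (z ^ (n + 1) :: l) ≤ ofList (z :: l) := by
  simp only [ofList_cons]
  exact sup_le_sup_right
    (span_singleton_le_span_singleton.mpr (dvd_pow_self z n.succ_ne_zero)) _

end Ideal

namespace RingTheory.Sequence

open Function

variable {S : Type*} [CommRing S] {N : Type*} [AddCommGroup N] [Module S N]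

theorem isWeaklyRegular_of_exact {A B C : Type*} [AddCommGroup A] [Module S A]
    [AddCommGroup B] [Module S B] [AddCommGroup C] [Module S C] {rs : List S}
    {f : A →ₗ[S] B} {g : B →ₗ[S] C} (hf : Injective f) (hfg : Exact f g) (hg : Surjective g)
    (hA : IsWeaklyRegular A rs) (hC : IsWeaklyRegular C rs) : IsWeaklyRegular B rs := by
  induction rs generalizing A B C with
  | nil => exact .nil S B
  | cons r rs ih =>
    rw [isWeaklyRegular_cons_iff] at hA hC ⊢
    have hf' : Injective (QuotSMulTop.map r f) := by
      rw [← LinearMap.exact_zero_iff_injective PUnit] at hf ⊢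
      simpa using QuotSMulTop.map_first_exact_on_four_term_exact_of_isSMulRegular_last
        (r := r) hf hfg hC.1
    exact ⟨isSMulRegular_of_range_eq_ker hf hfg.linearMap_ker_eq.symm hA.1 hC.1,
      ih hf' (QuotSMulTop.map_exact r hfg hg) (QuotSMulTop.map_surjective r hg) hA.2 hC.2⟩

-- `0 → N/xN → N/xyN → N/yN → 0`, the first map being multiplication by `y`, is exact
-- because `y` is regular on `N`.
theorem IsWeaklyRegular.mul_cons {x y : S} {l : List S} (hx : IsWeaklyRegular N (x :: l))
    (hy : IsWeaklyRegular N (y :: l)) : IsWeaklyRegular N (x * y :: l) := by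
  rw [isWeaklyRegular_cons_iff] at hx hy ⊢
  have hxy : (x * y) • (⊤ : Submodule S N) ≤ y • ⊤ := by
    rw [mul_comm, mul_smul]; exact smul_mono_right y le_top
  have hmul : x • (⊤ : Submodule S N) ≤ comap (y • LinearMap.id) ((x * y) • ⊤) := by
    rintro _ ⟨b, -, rfl⟩
    exact mem_smul_top_iff_exists_smul_eq.mpr ⟨b, by rw [mul_comm, mul_smul]; rfl⟩
  let f : QuotSMulTop x N →ₗ[S] QuotSMulTop (x * y) N := mapQ _ _ _ hmul
  refine ⟨hx.1.mul hy.1, isWeaklyRegular_of_exact (f := f) (g := factor hxy) ?_ ?_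
    (factor_surjective hxy) hx.2 hy.2⟩
  · rw [← LinearMap.ker_eq_bot, eq_bot_iff]
    rintro ⟨m⟩ hm
    obtain ⟨b, hb⟩ := mem_smul_top_iff_exists_smul_eq.mp ((Quotient.mk_eq_zero _).mp hm)
    have : m = x • b := hy.1 (by simpa [mul_comm x y, mul_smul] using hb.symm)
    exact (Quotient.mk_eq_zero _).mpr (mem_smul_top_iff_exists_smul_eq.mpr ⟨b, this.symm⟩)
  · rintro ⟨m⟩
    constructor
    · intro hm
      obtain ⟨b, rfl⟩ := mem_smul_top_iff_exists_smul_eq.mp ((Quotient.mk_eq_zero _).mp hm)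
      exact ⟨Submodule.Quotient.mk b, rfl⟩
    · rintro ⟨⟨b⟩, hb⟩
      rw [← hb]
      exact (Quotient.mk_eq_zero _).mpr (mem_smul_top_iff_exists_smul_eq.mpr ⟨b, rfl⟩)

theorem IsWeaklyRegular.pow_succ_cons {z : S} {l : List S} (h : IsWeaklyRegular N (z :: l))
    (n : ℕ) : IsWeaklyRegular N (z ^ (n + 1) :: l) := by
  induction n with
  | zero => simpa using h
  | succ n ih => rw [pow_succ]; exact ih.mul_cons h

theorem IsWeaklyRegular.mem_of_concat_smul_mem {z : S} {l : List S}
    (h : IsWeaklyRegular N (l ++ [z])) {m : N}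
    (hm : z • m ∈ Ideal.ofList l • (⊤ : Submodule S N)) :
    m ∈ Ideal.ofList l • (⊤ : Submodule S N) :=
  mem_of_isSMulRegular_quotient_of_smul_mem
    ((isWeaklyRegular_singleton_iff _ z).mp ((isWeaklyRegular_append_iff N l [z]).mp h).2) hm

theorem IsWeaklyRegular.mem_ofList_cons_of_smul_mem {z : S} {l : List S}
    (h : IsWeaklyRegular N (z :: l)) {w : N}
    (hw : z • w ∈ Ideal.ofList l • (⊤ : Submodule S N)) :
    w ∈ Ideal.ofList (z :: l) • (⊤ : Submodule S N) := by
  induction l using List.reverseRecOn generalizing w with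
  | nil =>
    have hzw : z • w = z • 0 := by simpa using hw
    simp [((isWeaklyRegular_cons_iff N z []).mp h).1 hzw]
  | append_singleton l c ih =>
    rw [← List.cons_append] at h
    obtain ⟨v, hv⟩ := mem_ofList_concat_smul_top_iff.mp hw
    have hcv : c • v ∈ Ideal.ofList (z :: l) • (⊤ : Submodule S N) := by
      rw [← sub_sub_cancel (z • w) (c • v)]
      exact sub_mem (smul_mem_ofList_smul_top List.mem_cons_self w)
        (ofList_smul_top_mono (List.subset_cons_self z l) hv)
    obtain ⟨e, he⟩ := mem_ofList_cons_smul_top_iff.mp (h.mem_of_concat_smul_mem hcv)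
    have hze : z • (w - c • e) ∈ Ideal.ofList l • (⊤ : Submodule S N) := by
      have : z • (w - c • e) = (z • w - c • v) + c • (v - z • e) := by
        rw [smul_sub, smul_sub, smul_comm z c e]; abel
      exact this ▸ add_mem hv (smul_mem _ c he)
    have hw' := ih ((isWeaklyRegular_append_iff N _ [c]).mp h).1 hze
    rw [← sub_add_cancel w (c • e)]
    exact add_mem
      (ofList_smul_top_mono (List.cons_subset_cons z (List.subset_append_left l [c])) hw')
      (smul_mem_ofList_smul_top (by simp) e)

-- For `rs = z :: l`, apply the induction hypothesis to `z ^ (t + 1) • m` in `N/z^(t+2)N`, on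
-- which `l` is still weakly regular, then cancel `z ^ (t + 1)` modulo `(l)N`.
theorem IsWeaklyRegular.mem_of_prod_pow_smul_mem {rs : List S} (h : IsWeaklyRegular N rs)
    {t : ℕ} {m : N}
    (hm : rs.prod ^ t • m ∈ Ideal.ofList (rs.map (· ^ (t + 1))) • (⊤ : Submodule S N)) :
    m ∈ Ideal.ofList rs • (⊤ : Submodule S N) := by
  rcases t with _ | t
  · simpa using hm
  induction rs generalizing N m with
  | nil => simpa using hm
  | cons z l ih =>
    rw [List.prod_cons, List.map_cons] at hm
    obtain ⟨c, hc⟩ := mem_ofList_cons_smul_top_iff.mp hm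
    set K : Submodule S N := z ^ (t + 1 + 1) • ⊤
    have hK : IsWeaklyRegular (N ⧸ K) l :=
      ((isWeaklyRegular_cons_iff N _ l).mp (h.pow_succ_cons (t + 1))).2
    have hmod : l.prod ^ (t + 1) • K.mkQ (z ^ (t + 1) • m) ∈
        Ideal.ofList (l.map (· ^ (t + 1 + 1))) • (⊤ : Submodule S (N ⧸ K)) := by
      have hzc : K.mkQ (z ^ (t + 1 + 1) • c) = 0 :=
        (Quotient.mk_eq_zero K).mpr (smul_mem_pointwise_smul c _ ⊤ mem_top)
      have := smul_top_le_comap_smul_top _ K.mkQ hc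
      rwa [mem_comap, map_sub, hzc, sub_zero, mul_pow, mul_comm, mul_smul, map_smul] at this
    obtain ⟨v, hv, _, hc', hvc⟩ := mem_sup.mp (mkQ_mem_smul_top_iff.mp (ih hK hmod))
    obtain ⟨c', rfl⟩ := mem_smul_top_iff_exists_smul_eq.mp hc'
    have hzm : z ^ (t + 1) • (m - z • c') ∈ Ideal.ofList l • (⊤ : Submodule S N) := by
      rwa [smul_sub, ← mul_smul, ← pow_succ, ← hvc, add_sub_cancel_right]
    rw [← sub_add_cancel m (z • c')]
    exact add_mem (smul_mono_left (Ideal.ofList_pow_succ_cons_le z l t)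
      ((h.pow_succ_cons t).mem_ofList_cons_of_smul_mem hzm))
      (smul_mem_ofList_smul_top List.mem_cons_self c')

theorem IsWeaklyRegular.ofList_smul_top_inf_le {K : Submodule S N} {rs : List S}
    (h : IsWeaklyRegular (N ⧸ K) rs) :
    Ideal.ofList rs • ⊤ ⊓ K ≤ Ideal.ofList rs • K := by
  induction rs using List.reverseRecOn with
  | nil => simp
  | append_singleton l z ih =>
    rintro a ⟨ha, haK⟩
    obtain ⟨c, hc⟩ := mem_ofList_concat_smul_top_iff.mp ha
    have hzc : z • K.mkQ c ∈ Ideal.ofList l • (⊤ : Submodule S (N ⧸ K)) := by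
      have := neg_mem (smul_top_le_comap_smul_top _ K.mkQ hc)
      rwa [mem_comap, map_neg, map_sub, (by simpa using haK : K.mkQ a = 0), zero_sub,
        neg_neg, map_smul] at this
    obtain ⟨c', hc', k, hk, rfl⟩ :=
      mem_sup.mp (mkQ_mem_smul_top_iff.mp (h.mem_of_concat_smul_mem hzc))
    have hazk : a - z • k ∈ Ideal.ofList l • ⊤ ⊓ K := by
      refine ⟨?_, sub_mem haK (smul_mem K z hk)⟩
      have : a - z • k = (a - z • (c' + k)) + z • c' := by rw [smul_add]; abel
      exact this ▸ add_mem hc (smul_mem _ z hc')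
    rw [← sub_add_cancel a (z • k)]
    exact add_mem (smul_mono_left (Ideal.span_mono (List.subset_append_left l [z]))
      (ih ((isWeaklyRegular_append_iff _ l [z]).mp h).1 hazk))
      (smul_mem_smul (subset_span (by simp)) hk)

end RingTheory.Sequence

section FlatBaseChange

open TensorProduct

variable {R : Type*} [CommRing R] {M : Type*} [AddCommGroup M] [Module R M]
  (R' : Type*) [CommRing R'] [Algebra R R'] (u : M)

theorem annihilator_span_one_tmul [Module.Flat R R'] :
    (span R' {(1 : R') ⊗ₜ[R] u}).annihilator =
      (span R {u}).annihilator.map (algebraMap R R') := by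
  have tmul_eq (s : R') : s • ((1 : R') ⊗ₜ[R] u) = s ⊗ₜ u := by
    rw [smul_tmul', smul_eq_mul, mul_one]
  refine le_antisymm (fun s hs => ?_) (Ideal.map_le_iff_le_comap.mpr fun a ha => ?_)
  · rw [mem_annihilator_span_singleton, tmul_eq] at hs
    rw [Ideal.annihilator_span_singleton_eq_torsionOf]
    let ψ : (R ⧸ Ideal.torsionOf R M u) →ₗ[R] M :=
      (R ∙ u).subtype ∘ₗ (Ideal.quotTorsionOfEquivSpanSingleton R M u).toLinearMap
    have hψ : Function.Injective (ψ.lTensor R') :=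
      Module.Flat.lTensor_preserves_injective_linearMap ψ
        ((R ∙ u).injective_subtype.comp (LinearEquiv.injective _))
    have hs1 : s ⊗ₜ[R] (Ideal.Quotient.mk _ 1 : R ⧸ Ideal.torsionOf R M u) = 0 :=
      hψ (by simpa [ψ, ← Ideal.Quotient.mk_eq_mk] using hs)
    have := congrArg (tensorQuotEquivQuotSMul R' _) hs1
    rwa [tensorQuotEquivQuotSMul_tmul_mk, one_smul, map_zero, Quotient.mk_eq_zero,
      Ideal.smul_top_eq_map] at this
  · rw [Ideal.mem_comap, mem_annihilator_span_singleton, algebraMap_smul, ← tmul_smul,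
      (mem_annihilator_span_singleton u a).mp ha, tmul_zero]

theorem ker_baseChange_mkQ_span_singleton :
    LinearMap.ker ((span R {u}).mkQ.baseChange R') = span R' {(1 : R') ⊗ₜ[R] u} := by
  refine le_antisymm (fun x hx => ?_) (span_le.mpr ?_)
  · rw [LinearMap.mem_ker, LinearMap.baseChange_eq_ltensor, ← LinearMap.mem_ker,
      lTensor_mkQ] at hx
    obtain ⟨w, rfl⟩ := hx
    induction w using TensorProduct.induction_on with
    | zero => simp
    | tmul s v =>
      obtain ⟨c, hc⟩ := mem_span_singleton.mp v.2
      refine mem_span_singleton.mpr ⟨c • s, ?_⟩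
      rw [LinearMap.lTensor_tmul, coe_subtype, ← hc, smul_tmul', smul_eq_mul, mul_one, smul_tmul]
    | add a b ha hb => rw [map_add]; exact add_mem ha hb
  · rintro _ rfl
    rw [SetLike.mem_coe, LinearMap.mem_ker, LinearMap.baseChange_tmul, mkQ_apply,
      (Quotient.mk_eq_zero _).mpr (mem_span_singleton_self u), tmul_zero]

noncomputable def quotSpanOneTmulEquiv :
    (R' ⊗[R] M ⧸ span R' {(1 : R') ⊗ₜ[R] u}) ≃ₗ[R'] R' ⊗[R] (M ⧸ span R {u}) :=
  (quotEquivOfEq _ _ (ker_baseChange_mkQ_span_singleton R' u).symm).trans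
    (LinearMap.quotKerEquivOfSurjective _
      (LinearMap.baseChange_surjective R' (span R {u}).mkQ_surjective))

end FlatBaseChange

open RingTheory.Sequence in
theorem annihilator_of_class_in_top_localCohomology_general
    {R : Type u} [CommRing R] (𝔓 : Ideal R)
    (M : Type u) [AddCommGroup M] [Module R M] (u : M)
    (hM : Pseudoflat 𝔓 M)
    (hMu : Pseudoflat 𝔓 (M ⧸ Submodule.span R {u}))
    (R' : Type u) [CommRing R'] [Algebra R R'] [Module.Flat R R']
    (d : ℕ) (y : Fin d → R')
    (hy : RingTheory.Sequence.IsWeaklyRegular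
      (R' ⧸ 𝔓.map (algebraMap R R')) (List.ofFn y)) :
    ∀ r : R',
      (∃ t : ℕ, ((∏ i, y i) ^ t * r) • ((1 : R') ⊗ₜ[R] u : R' ⊗[R] M) ∈
          (Ideal.span (Set.range fun i => y i ^ (t + 1))) •
            (⊤ : Submodule R' (R' ⊗[R] M)))
      ↔ r ∈ Ideal.map (algebraMap R R') ((Submodule.span R {u}).annihilator) ⊔
            Ideal.span (Set.range y) := by
  intro r
  rw [← annihilator_span_one_tmul, ← Ideal.ofList_ofFn]
  set e : R' ⊗[R] M := 1 ⊗ₜ[R] u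
  constructor
  · rintro ⟨t, ht⟩
    have hN : IsWeaklyRegular (R' ⊗[R] M) (List.ofFn y) := hM R' inferInstance _ hy
    have hQ : IsWeaklyRegular (R' ⊗[R] M ⧸ span R' {e}) (List.ofFn y) :=
      ((quotSpanOneTmulEquiv R' u).isWeaklyRegular_congr _).mpr (hMu R' inferInstance _ hy)
    have hre : r • e ∈ Ideal.ofList (List.ofFn y) • (⊤ : Submodule R' (R' ⊗[R] M)) := by
      refine hN.mem_of_prod_pow_smul_mem (t := t) ?_
      rwa [List.prod_ofFn, List.map_ofFn, Ideal.ofList_ofFn, smul_smul]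
    obtain ⟨s, hs, hse⟩ := mem_smul_span_singleton.mp
      (hQ.ofList_smul_top_inf_le ⟨hre, smul_mem _ r (mem_span_singleton_self e)⟩)
    have hrs : r - s ∈ (span R' {e}).annihilator := by
      rw [mem_annihilator_span_singleton, sub_smul, hse, sub_self]
    exact sub_add_cancel r s ▸ add_mem (mem_sup_left hrs) (mem_sup_right hs)
  · intro hr
    obtain ⟨a, ha, s, hs, rfl⟩ := mem_sup.mp hr
    rw [mem_annihilator_span_singleton] at ha
    refine ⟨0, ?_⟩
    simpa [add_smul, ha, Ideal.ofList_ofFn] using smul_mem_smul hs (mem_top (x := e))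

theorem annihilator_of_class_in_top_localCohomology
    {R : Type u} [CommRing R] (𝔓 : Ideal R) (h𝔓 : 𝔓 ≠ ⊤)
    (M : Type u) [AddCommGroup M] [Module R M] (u : M)
    (hM : Pseudoflat 𝔓 M)
    (hMu : Pseudoflat 𝔓 (M ⧸ Submodule.span R {u}))
    (R' : Type u) [CommRing R'] [Algebra R R'] [Module.Flat R R']
    (d : ℕ) (y : Fin d → R')
    (hy : RingTheory.Sequence.IsWeaklyRegular
      (R' ⧸ 𝔓.map (algebraMap R R')) (List.ofFn y)) :
    ∀ r : R',
      (∃ t : ℕ, ((∏ i, y i) ^ t * r) • ((1 : R') ⊗ₜ[R] u : R' ⊗[R] M) ∈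
          (Ideal.span (Set.range fun i => y i ^ (t + 1))) •
            (⊤ : Submodule R' (R' ⊗[R] M)))
      ↔ r ∈ Ideal.map (algebraMap R R') ((Submodule.span R {u}).annihilator) ⊔
            Ideal.span (Set.range y) :=
  annihilator_of_class_in_top_localCohomology_general 𝔓 M u hM hMu R' d y hy
end

section
/- Let R be an arbitrary (not necessarily Noetherian) commutative ring and G_• : 0 → R^{b_n} →^{α_n} ⋯ → R^{b_1} →^{α_1} R^{b_0} → 0 a complex of finite free modules. Suppose that R has Koszul depth at least 1 on each determinantal ideal I_{r_i}(α_i) for 1 ≤ i ≤ n, where r_i = Σ_{t=0}^{n-i} (−1)^t b_{n−t}. Then I_{r_i+1}(α_i) = 0 for all 1 ≤ i ≤ n. -/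
/-!
STATEMENT 11.  `R` an arbitrary commutative ring,
`G_• : 0 → R^{b_n} →^{α_n} ⋯ → R^{b_1} →^{α_1} R^{b_0} → 0` a complex of
finite free modules (encoded by matrices: `α j` is the matrix of the map
`R^{b (j+1)} → R^{b j}`, i.e. the paper's `α_{j+1}`, and being a complex means
`α j * α (j+1) = 0`).  Let `r_i = Σ_{t=0}^{n−i} (−1)^t b_{n−t}` (given as
natural numbers `r` with the defining equation as a hypothesis).  If `R` has
Koszul depth ≥ 1 on each determinantal ideal `I_{r_i}(α_i)` (`1 ≤ i ≤ n`),
i.e. these ideals have zero annihilator, then `I_{r_i+1}(α_i) = 0` for all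
`1 ≤ i ≤ n`.
-/

/-- The ideal of `r × r` minors of a matrix. -/
def minorsIdeal {R : Type*} [CommRing R] {m n : ℕ}
    (A : Matrix (Fin m) (Fin n) R) (r : ℕ) : Ideal R :=
  Ideal.span { x | ∃ (f : Fin r → Fin m) (g : Fin r → Fin n),
    Function.Injective f ∧ Function.Injective g ∧ x = (A.submatrix f g).det }

lemma minorsIdeal_eq_bot_of_cols_lt {R : Type*} [CommRing R] {m n : ℕ}
    (A : Matrix (Fin m) (Fin n) R) {r : ℕ} (h : n < r) :
    minorsIdeal A r = ⊥ := by
  rw [minorsIdeal]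
  convert Ideal.span_empty
  ext x
  simp only [Set.mem_setOf_eq, Set.mem_empty_iff_false, iff_false]
  rintro ⟨f, g, hf, hg, rfl⟩
  have := Fintype.card_le_of_injective g hg
  simp at this; omega

lemma minorsIdeal_eq_bot_of_rows_lt {R : Type*} [CommRing R] {m n : ℕ}
    (A : Matrix (Fin m) (Fin n) R) {r : ℕ} (h : m < r) :
    minorsIdeal A r = ⊥ := by
  rw [minorsIdeal]
  convert Ideal.span_empty
  ext x
  simp only [Set.mem_setOf_eq, Set.mem_empty_iff_false, iff_false]
  rintro ⟨f, g, hf, hg, rfl⟩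
  have := Fintype.card_le_of_injective f hf
  simp at this; omega

lemma mul_eq_zero_of_forall_gen {R : Type*} [CommRing R] {m n : ℕ}
    (A : Matrix (Fin m) (Fin n) R) (r : ℕ) (x : R)
    (h : ∀ (f : Fin r → Fin m) (g : Fin r → Fin n), Function.Injective f →
      Function.Injective g → (A.submatrix f g).det * x = 0) :
    ∀ a ∈ minorsIdeal A r, a * x = 0 := by
  intro a ha
  refine Submodule.span_induction ?_ ?_ ?_ ?_ ha
  · rintro y ⟨f, g, hf, hg, rfl⟩
    exact h f g hf hg
  · simp
  · intro y z _ _ hy hz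
    rw [add_mul, hy, hz, add_zero]
  · intro c y _ hy
    rw [smul_eq_mul, mul_assoc, hy, mul_zero]

lemma det_mul_entry_eq_zero {R : Type*} [CommRing R] {p q s : ℕ}
    (A : Matrix (Fin p) (Fin q) R) (B : Matrix (Fin q) (Fin s) R)
    (hAB : A * B = 0) (f : Fin q → Fin q) (g : Fin q → Fin s)
    (hf : Function.Injective f) (i : Fin p) (k : Fin q) :
    (B.submatrix f g).det * A i k = 0 := by
  set M := B.submatrix f g with hM
  have hfb : Function.Bijective f := Finite.injective_iff_bijective.mp hf
  set w : Fin q → R := fun t => A i (f t) with hwdef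
  have hw : Matrix.vecMul w M = 0 := by
    funext jj
    have h0 : (A * B) i (g jj) = 0 := by rw [hAB]; rfl
    rw [Matrix.mul_apply] at h0
    calc Matrix.vecMul w M jj = ∑ t, A i (f t) * B (f t) (g jj) := by
          simp [Matrix.vecMul, dotProduct, hM, hwdef]
      _ = ∑ k', A i k' * B k' (g jj) :=
          Fintype.sum_bijective f hfb _ _ (fun t => rfl)
      _ = 0 := h0
  have h2 : Matrix.vecMul w (M * M.adjugate) = 0 := by
    rw [← Matrix.vecMul_vecMul, hw, Matrix.zero_vecMul]
  rw [Matrix.mul_adjugate] at h2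
  have h3 : ∀ t, M.det * w t = 0 := by
    intro t
    have := congrFun h2 t
    simpa [Matrix.vecMul, dotProduct, Matrix.one_apply, mul_ite,
      Finset.sum_ite_eq, mul_comm] using this
  obtain ⟨t, ht⟩ := hfb.surjective k
  have h4 := h3 t
  simpa [hwdef, ht] using h4

theorem minors_vanish_of_koszul_depth_one
    {R : Type*} [CommRing R] (n : ℕ) (b : ℕ → ℕ)
    (α : ∀ j : ℕ, Matrix (Fin (b j)) (Fin (b (j + 1))) R)
    (hcomplex : ∀ j : ℕ, j + 2 ≤ n → α j * α (j + 1) = 0)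
    (r : ℕ → ℕ)
    (hr : ∀ i : ℕ, 1 ≤ i → i ≤ n →
      (r i : ℤ) = ∑ t ∈ Finset.range (n - i + 1), (-1 : ℤ) ^ t * (b (n - t) : ℤ))
    (hdepth : ∀ j : ℕ, j < n →
      ∀ x : R, (∀ a ∈ minorsIdeal (α j) (r (j + 1)), a * x = 0) → x = 0) :
    ∀ j : ℕ, j < n → minorsIdeal (α j) (r (j + 1) + 1) = ⊥ := by
  intro j hj
  by_cases hcnt : b (j + 1) < r (j + 1) + 1
  · exact minorsIdeal_eq_bot_of_cols_lt _ hcnt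
  push_neg at hcnt
  have hj2 : j + 2 ≤ n := by
    by_contra h
    have hjn : j + 1 = n := by omega
    have h1 := hr (j + 1) (by omega) (by omega)
    rw [show n - (j + 1) + 1 = 1 from by omega] at h1
    simp at h1
    rw [← hjn] at h1
    omega
  -- the rank relation
  have h1 := hr (j + 1) (by omega) (by omega)
  have h2 := hr (j + 2) (by omega) hj2
  have e1 : n - (j + 1) + 1 = (n - (j + 2) + 1) + 1 := by omega
  rw [e1, Finset.sum_range_succ] at h1
  have e2 : n - (n - (j + 2) + 1) = j + 1 := by omega
  rw [e2, ← h2] at h1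
  -- h1 : (r (j+1) : ℤ) = r (j+2) + (-1)^(n-(j+2)+1) * b (j+1)
  rcases Nat.even_or_odd (n - (j + 2) + 1) with he | ho
  · rw [he.neg_one_pow] at h1
    omega
  rw [ho.neg_one_pow] at h1
  have hrel : r (j + 2) = r (j + 1) + b (j + 1) := by omega
  by_cases hz : r (j + 1) = 0
  · -- r (j+2) = b (j+1), adjugate argument
    have hq : r (j + 2) = b (j + 1) := by omega
    have hA0 : ∀ (i : Fin (b j)) (k : Fin (b (j + 1))), α j i k = 0 := by
      intro i k
      apply hdepth (j + 1) (by omega)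
      apply mul_eq_zero_of_forall_gen
      intro f g hf hg
      have hf' : Function.Injective (fun t : Fin (b (j+1)) => f (Fin.cast hq.symm t)) := by
        intro a b hab
        have := hf hab
        exact Fin.cast_injective _ this
      have := det_mul_entry_eq_zero (α j) (α (j + 1)) (hcomplex j hj2)
        (fun t => f (Fin.cast hq.symm t)) (fun t => g (Fin.cast hq.symm t)) hf' i k
      have hdet : ((α (j+1)).submatrix f g).det =
          ((α (j+1)).submatrix (fun t : Fin (b (j+1)) => f (Fin.cast hq.symm t))
            (fun t => g (Fin.cast hq.symm t))).det := by
        have := (Matrix.det_submatrix_equiv_self (finCongr hq.symm)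
          ((α (j+1)).submatrix f g)).symm
        rw [Matrix.submatrix_submatrix] at this
        exact this
      rw [hdet]
      exact this
    rw [hz]
    rw [eq_bot_iff, minorsIdeal, Ideal.span_le]
    rintro x ⟨f, g, hf, hg, rfl⟩
    have : (α j).submatrix f g = 0 := by
      ext a c
      simp [hA0]
    rw [this]
    simp
  · -- r (j+2) > b (j+1): ideal of minors of α (j+1) is ⊥, ring trivial
    have hbot : minorsIdeal (α (j + 1)) (r (j + 2)) = ⊥ :=
      minorsIdeal_eq_bot_of_rows_lt _ (by omega)
    have htriv : ∀ x : R, x = 0 := by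
      intro x
      apply hdepth (j + 1) (by omega)
      rw [hbot]
      intro a ha
      rw [Ideal.mem_bot] at ha
      rw [ha, zero_mul]
    rw [eq_bot_iff, minorsIdeal, Ideal.span_le]
    intro x _
    rw [htriv x]
    simp
end

section
/- Let R be a Noetherian ring, P a prime ideal, A = R/P, and G_• a finite complex of finitely generated free R-modules such that A ⊗_R G_• is acyclic. If H is an R-module that is a direct limit of modules each having a finite filtration with A-flat factors, then H ⊗_R G_• is acyclic. -/
/-!
Tensor products commute with direct limits and direct limits are exact, so it suffices to treat
one module `M` of the system. As the terms of `G_•` are flat, a short exact sequence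
`0 → M' → M → M'' → 0` gives a short exact sequence of complexes after tensoring with `G_•`, and
a diagram chase shows that `M ⊗ G_•` is acyclic when `M' ⊗ G_•` and `M'' ⊗ G_•` are. Induction
along the filtration reduces to a flat `A`-module `Q`, where `Q ⊗_R G_• = Q ⊗_A (A ⊗_R G_•)` is
acyclic because `Q` is `A`-flat.
-/

open scoped TensorProduct
open LinearMap

universe u

theorem rTensor_lTensor_comm_apply {R : Type*} [CommSemiring R] {X Y P P' : Type*}
    [AddCommMonoid X] [Module R X] [AddCommMonoid Y] [Module R Y]
    [AddCommMonoid P] [Module R P] [AddCommMonoid P'] [Module R P']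
    (g : X →ₗ[R] Y) (d : P →ₗ[R] P') (x : X ⊗[R] P) :
    rTensor P' g (lTensor X d x) = lTensor Y d (rTensor P g x) := by
  rw [← comp_apply, ← comp_apply, rTensor_comp_lTensor, lTensor_comp_rTensor]

theorem lTensor_comp_rTensor_comm {R : Type*} [CommSemiring R] {X Y P P' : Type*}
    [AddCommMonoid X] [Module R X] [AddCommMonoid Y] [Module R Y]
    [AddCommMonoid P] [Module R P] [AddCommMonoid P'] [Module R P']
    (g : X →ₗ[R] Y) (d : P →ₗ[R] P') :
    lTensor Y d ∘ₗ rTensor P g = rTensor P' g ∘ₗ lTensor X d := by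
  rw [lTensor_comp_rTensor, rTensor_comp_lTensor]

namespace Module.DirectLimit

variable {R : Type*} [Semiring R] {ι : Type*} [Preorder ι] [DecidableEq ι]
  {G₁ G₂ G₃ : ι → Type*} [∀ i, AddCommMonoid (G₁ i)] [∀ i, Module R (G₁ i)]
  [∀ i, AddCommMonoid (G₂ i)] [∀ i, Module R (G₂ i)]
  [∀ i, AddCommMonoid (G₃ i)] [∀ i, Module R (G₃ i)]
  {f₁ : ∀ i j, i ≤ j → G₁ i →ₗ[R] G₁ j} {f₂ : ∀ i j, i ≤ j → G₂ i →ₗ[R] G₂ j}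
  {f₃ : ∀ i j, i ≤ j → G₃ i →ₗ[R] G₃ j}

theorem exact_map [IsDirectedOrder ι] [Nonempty ι] [DirectedSystem G₃ (f₃ · · ·)]
    {g₁ : ∀ i, G₁ i →ₗ[R] G₂ i} {g₂ : ∀ i, G₂ i →ₗ[R] G₃ i}
    (hg₁ : ∀ i j h, g₁ j ∘ₗ f₁ i j h = f₂ i j h ∘ₗ g₁ i)
    (hg₂ : ∀ i j h, g₂ j ∘ₗ f₂ i j h = f₃ i j h ∘ₗ g₂ i)
    (h : ∀ i, Function.Exact (g₁ i) (g₂ i)) :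
    Function.Exact (map g₁ hg₁) (map g₂ hg₂) := by
  refine fun y ↦ ⟨fun hy ↦ ?_, ?_⟩
  · induction y using DirectLimit.induction_on with | ih i x => ?_
    rw [map_apply_of] at hy
    obtain ⟨j, hij, hxj⟩ := of.zero_exact hy
    obtain ⟨w, hw⟩ := (h j (f₂ i j hij x)).mp (by rw [← comp_apply, hg₂ i j hij, comp_apply, hxj])
    exact ⟨of _ _ _ _ j w, by rw [map_apply_of, hw, of_f]⟩
  · rintro ⟨z, rfl⟩
    induction z using DirectLimit.induction_on with | ih i z => ?_
    rw [map_apply_of, map_apply_of, (h i).apply_apply_eq_zero, map_zero]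

end Module.DirectLimit

section

variable {R : Type*} [CommRing R]
  {N₁ N₂ N₃ : Type*} [AddCommGroup N₁] [Module R N₁] [AddCommGroup N₂] [Module R N₂]
  [AddCommGroup N₃] [Module R N₃] (d₁ : N₁ →ₗ[R] N₂) (d₂ : N₂ →ₗ[R] N₃)

theorem exact_lTensor_iff_of_linearEquiv {M M' : Type*} [AddCommMonoid M] [Module R M]
    [AddCommMonoid M'] [Module R M'] (e : M ≃ₗ[R] M') :
    Function.Exact (lTensor M d₁) (lTensor M d₂) ↔
      Function.Exact (lTensor M' d₁) (lTensor M' d₂) :=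
  (Function.Exact.iff_of_ladder_linearEquiv (e₁ := e.rTensor N₁) (e₂ := e.rTensor N₂)
    (e₃ := e.rTensor N₃) (by ext; simp) (by ext; simp)).symm

theorem exact_lTensor_of_subsingleton (M : Type*) [AddCommMonoid M] [Module R M]
    [Subsingleton M] : Function.Exact (lTensor M d₁) (lTensor M d₂) := by
  intro y
  simpa [Subsingleton.elim y 0] using ⟨0, map_zero _⟩

theorem exact_lTensor_of_shortExact [Module.Flat R N₂] [Module.Flat R N₃]
    {A B C : Type*} [AddCommGroup A] [Module R A] [AddCommGroup B] [Module R B]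
    [AddCommGroup C] [Module R C] {i : A →ₗ[R] B} {p : B →ₗ[R] C}
    (hi : Function.Injective i) (hip : Function.Exact i p) (hp : Function.Surjective p)
    (hd : d₂ ∘ₗ d₁ = 0)
    (hA : Function.Exact (lTensor A d₁) (lTensor A d₂))
    (hC : Function.Exact (lTensor C d₁) (lTensor C d₂)) :
    Function.Exact (lTensor B d₁) (lTensor B d₂) := by
  have hdd (y : B ⊗[R] N₁) : lTensor B d₂ (lTensor B d₁ y) = 0 := by
    rw [← comp_apply, ← lTensor_comp, hd, lTensor_zero, LinearMap.zero_apply]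
  refine fun x ↦ ⟨fun hx ↦ ?_, fun ⟨y, hy⟩ ↦ hy ▸ hdd y⟩
  obtain ⟨y', hy'⟩ := (hC (rTensor N₂ p x)).mp (by rw [← rTensor_lTensor_comm_apply, hx, map_zero])
  obtain ⟨y, rfl⟩ := rTensor_surjective N₁ hp y'
  obtain ⟨z, hz⟩ := (Module.Flat.rTensor_exact N₂ hip (x - lTensor B d₁ y)).mp
    (by rw [map_sub, rTensor_lTensor_comm_apply, hy', sub_self])
  obtain ⟨w, hw⟩ := (hA z).mp <| Module.Flat.rTensor_preserves_injective_linearMap i hi <| by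
    rw [map_zero, rTensor_lTensor_comm_apply, hz, map_sub, hx, hdd, sub_zero]
  exact ⟨y + rTensor N₁ i w, by rw [map_add, ← rTensor_lTensor_comm_apply, hw, hz, add_sub_cancel]⟩

theorem exact_lTensor_of_filtration [Module.Flat R N₂] [Module.Flat R N₃] (hd : d₂ ∘ₗ d₁ = 0)
    {M : Type*} [AddCommGroup M] [Module R M] {m : ℕ} {F : ℕ → Submodule R M}
    (h0 : F 0 = ⊥) (hmono : ∀ k, F k ≤ F (k + 1)) (htop : F m = ⊤)
    (hfac : ∀ k < m,
      Function.Exact (lTensor (F (k + 1) ⧸ (F k).comap (F (k + 1)).subtype) d₁)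
        (lTensor (F (k + 1) ⧸ (F k).comap (F (k + 1)).subtype) d₂)) :
    Function.Exact (lTensor M d₁) (lTensor M d₂) := by
  suffices ∀ k ≤ m, Function.Exact (lTensor (F k) d₁) (lTensor (F k) d₂) from
    (exact_lTensor_iff_of_linearEquiv d₁ d₂ (LinearEquiv.ofTop _ htop)).mp (this m le_rfl)
  intro k hk
  induction k with
  | zero =>
    have := Submodule.subsingleton_iff_eq_bot.mpr h0
    exact exact_lTensor_of_subsingleton d₁ d₂ _
  | succ k ih =>
    exact exact_lTensor_of_shortExact d₁ d₂ (Submodule.injective_subtype _)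
      (LinearMap.exact_subtype_mkQ _) (Submodule.mkQ_surjective _) hd
      ((exact_lTensor_iff_of_linearEquiv d₁ d₂ (Submodule.comapSubtypeEquivOfLe (hmono k))).mpr
        (ih (by omega)))
      (hfac k (by omega))

open TensorProduct.AlgebraTensorModule in
theorem exact_lTensor_of_flat {S : Type*} [CommRing S] [Algebra R S]
    (Q : Type*) [AddCommMonoid Q] [Module R Q] [Module S Q] [IsScalarTower R S Q]
    [Module.Flat S Q] (h : Function.Exact (lTensor S d₁) (lTensor S d₂)) :
    Function.Exact (lTensor Q d₁) (lTensor Q d₂) :=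
  -- `Module.Flat.lTensor_exact` is stated for additive groups.
  let _ := Module.addCommMonoidToAddCommGroup S (M := Q)
  (Function.Exact.iff_of_ladder_linearEquiv (M := Q ⊗[S] (S ⊗[R] N₁))
    (lTensor_comp_cancelBaseChange R S S (M := Q) d₁)
    (lTensor_comp_cancelBaseChange R S S (M := Q) d₂)).mpr (Module.Flat.lTensor_exact (R := S) Q h)

variable {ι : Type*} [Preorder ι] [DecidableEq ι] {G : ι → Type*} [∀ i, AddCommMonoid (G i)]
  [∀ i, Module R (G i)] (f : ∀ i j, i ≤ j → G i →ₗ[R] G j)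

theorem directLimitLeft_comp_lTensor {P P' : Type*} [AddCommMonoid P] [Module R P]
    [AddCommMonoid P'] [Module R P'] (d : P →ₗ[R] P') :
    Module.DirectLimit.map (fun i ↦ lTensor (G i) d)
        (fun _ _ _ ↦ lTensor_comp_rTensor_comm _ d) ∘ₗ
      (TensorProduct.directLimitLeft f P).toLinearMap =
    (TensorProduct.directLimitLeft f P').toLinearMap ∘ₗ lTensor (Module.DirectLimit G f) d := by
  ext; simp

theorem exact_lTensor_directLimit [IsDirectedOrder ι] [Nonempty ι] [DirectedSystem G (f · · ·)]
    (h : ∀ i, Function.Exact (lTensor (G i) d₁) (lTensor (G i) d₂)) :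
    Function.Exact (lTensor (Module.DirectLimit G f) d₁) (lTensor (Module.DirectLimit G f) d₂) :=
  (Function.Exact.iff_of_ladder_linearEquiv (directLimitLeft_comp_lTensor f d₁)
    (directLimitLeft_comp_lTensor f d₂)).mp (Module.DirectLimit.exact_map _ _ h)

end

theorem acyclic_of_tensor_directLimit_filtered_flat_general
    {R : Type u} [CommRing R] (P : Ideal R)
    (b : ℕ → ℕ)
    (d : ∀ k : ℕ, ((Fin (b (k + 1)) → R) →ₗ[R] (Fin (b k) → R)))
    (hdd : ∀ k, (d k).comp (d (k + 1)) = 0)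
    -- A ⊗ G_• acyclic
    (hacyclic : ∀ j : ℕ,
      Function.Exact (LinearMap.lTensor (R ⧸ P) (d (j + 1)))
        (LinearMap.lTensor (R ⧸ P) (d j)))
    -- the directed system whose limit is H
    (ι : Type u) [Preorder ι] [IsDirected ι (· ≤ ·)] [Nonempty ι] [DecidableEq ι]
    (G : ι → Type u) [∀ i, AddCommGroup (G i)] [∀ i, Module R (G i)]
    (f : ∀ i j, i ≤ j → G i →ₗ[R] G j)
    [DirectedSystem G fun i j h => f i j h]
    -- each `G i` has a finite filtration with `A`-flat factors
    (hfilt : ∀ i : ι, ∃ (m : ℕ) (F : ℕ → Submodule R (G i)),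
      F 0 = ⊥ ∧ (∀ k, F k ≤ F (k + 1)) ∧ F m = ⊤ ∧
      ∀ k < m, ∃ Q : ModuleCat.{u} (R ⧸ P), Module.Flat (R ⧸ P) Q ∧
        Nonempty ((↥(F (k + 1)) ⧸ Submodule.comap (F (k + 1)).subtype (F k))
          ≃ₗ[R] RestrictScalars R (R ⧸ P) Q))
    (H : Type u) [AddCommGroup H] [Module R H]
    (e : Module.DirectLimit G f ≃ₗ[R] H) :
    ∀ j : ℕ,
      Function.Exact (LinearMap.lTensor H (d (j + 1))) (LinearMap.lTensor H (d j)) := by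
  intro j
  refine (exact_lTensor_iff_of_linearEquiv _ _ e).mp (exact_lTensor_directLimit _ _ f fun i ↦ ?_)
  obtain ⟨m, F, h0, hmono, htop, hfac⟩ := hfilt i
  refine exact_lTensor_of_filtration _ _ (hdd j) h0 hmono htop fun k hk ↦ ?_
  obtain ⟨Q, hQ, ⟨eQ⟩⟩ := hfac k hk
  -- `RestrictScalars` keeps its original `A`-module structure only as a definition.
  let _ := RestrictScalars.moduleOrig R (R ⧸ P) Q
  have : Module.Flat (R ⧸ P) (RestrictScalars R (R ⧸ P) Q) := hQ
  exact (exact_lTensor_iff_of_linearEquiv _ _ eQ).mpr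
    (exact_lTensor_of_flat _ _ (RestrictScalars R (R ⧸ P) Q) (hacyclic j))

theorem acyclic_of_tensor_directLimit_filtered_flat
    {R : Type u} [CommRing R] [IsNoetherianRing R] (P : Ideal R) (hP : P.IsPrime)
    -- the finite free complex
    (n : ℕ) (b : ℕ → ℕ)
    (d : ∀ k : ℕ, ((Fin (b (k + 1)) → R) →ₗ[R] (Fin (b k) → R)))
    (hdd : ∀ k, (d k).comp (d (k + 1)) = 0)
    (hfin : ∀ k, n ≤ k → d k = 0)
    -- A ⊗ G_• acyclic
    (hacyclic : ∀ j : ℕ,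
      Function.Exact (LinearMap.lTensor (R ⧸ P) (d (j + 1)))
        (LinearMap.lTensor (R ⧸ P) (d j)))
    -- the directed system whose limit is H
    (ι : Type u) [Preorder ι] [IsDirected ι (· ≤ ·)] [Nonempty ι] [DecidableEq ι]
    (G : ι → Type u) [∀ i, AddCommGroup (G i)] [∀ i, Module R (G i)]
    (f : ∀ i j, i ≤ j → G i →ₗ[R] G j)
    [DirectedSystem G fun i j h => f i j h]
    -- each `G i` has a finite filtration with `A`-flat factors
    (hfilt : ∀ i : ι, ∃ (m : ℕ) (F : ℕ → Submodule R (G i)),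
      F 0 = ⊥ ∧ (∀ k, F k ≤ F (k + 1)) ∧ F m = ⊤ ∧
      ∀ k < m, ∃ Q : ModuleCat.{u} (R ⧸ P), Module.Flat (R ⧸ P) Q ∧
        Nonempty ((↥(F (k + 1)) ⧸ Submodule.comap (F (k + 1)).subtype (F k))
          ≃ₗ[R] RestrictScalars R (R ⧸ P) Q))
    (H : Type u) [AddCommGroup H] [Module R H]
    (e : Module.DirectLimit G f ≃ₗ[R] H) :
    ∀ j : ℕ,
      Function.Exact (LinearMap.lTensor H (d (j + 1))) (LinearMap.lTensor H (d j)) :=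
  acyclic_of_tensor_directLimit_filtered_flat_general P b d hdd hacyclic ι G f hfilt H e
end

section
/- Let R be a Noetherian ring of prime characteristic p, and let c, c' ∈ R with c' dividing c. Then the purity exponent of c' is at most the purity exponent of c: 𝔢_{c'} ≤ 𝔢_c. In particular, if 𝔢_c < ∞ for some nonzero c, then R is F-pure (hence reduced) and c is a nonzerodivisor. -/
/-!
STATEMENT 14.  `R` Noetherian of prime characteristic `p`, `c' ∣ c`.
Then `𝔢_{c'} ≤ 𝔢_c`; and if `c ≠ 0` has finite purity exponent, then `R` is
F-pure (i.e. `𝔢_1 = 0`), hence reduced, and `c` is a nonzerodivisor.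
-/

open scoped TensorProduct

universe u

/-- `FrobTwist R p e` is `R` viewed as an `R`-module via the `e`-th iterate of
the Frobenius endomorphism (the paper's `ᵉR`). -/
def FrobTwist (R : Type u) (p e : ℕ) : Type u := R

instance (R : Type u) [CommRing R] (p e : ℕ) : CommRing (FrobTwist R p e) :=
  inferInstanceAs (CommRing R)

noncomputable instance (R : Type u) [CommRing R] (p e : ℕ) [Fact p.Prime] [CharP R p] :
    Module R (FrobTwist R p e) :=
  Module.compHom R (iterateFrobenius R p e)

/-- The `R`-linear map `θ_{e,c} : R → ᵉR` with `1 ↦ ᵉc`. -/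
noncomputable def thetaMap (R : Type u) [CommRing R] (p e : ℕ) [Fact p.Prime] [CharP R p]
    (c : R) : R →ₗ[R] FrobTwist R p e where
  toFun r := (iterateFrobenius R p e r * c : R)
  map_add' a b := by
    show iterateFrobenius R p e (a + b) * c = iterateFrobenius R p e a * c + iterateFrobenius R p e b * c
    rw [map_add, add_mul]
  map_smul' r x := by
    show iterateFrobenius R p e (r * x) * c = iterateFrobenius R p e r * (iterateFrobenius R p e x * c)
    rw [map_mul, mul_assoc]

/-- A map of `R`-modules is pure if it stays injective after tensoring with
every `R`-module. -/
def IsPureMap {R : Type u} [CommRing R] {M N : Type u}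
    [AddCommGroup M] [AddCommGroup N] [Module R M] [Module R N]
    (f : M →ₗ[R] N) : Prop :=
  ∀ (V : Type u) [AddCommGroup V] [Module R V],
    Function.Injective (LinearMap.lTensor V f)

/-- The purity exponent `𝔢_c ∈ ℕ ∪ {∞}`: the least `e` such that `θ_{e',c}` is
pure for all `e' ≥ e` (and `∞` if there is no such `e`). -/
noncomputable def purityExponent (R : Type u) [CommRing R] (p : ℕ)
    [Fact p.Prime] [CharP R p] (c : R) : ℕ∞ :=
  sInf {n : ℕ∞ | ∃ e : ℕ, n = (e : ℕ∞) ∧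
    ∀ e' : ℕ, e ≤ e' → IsPureMap (thetaMap R p e' c)}

/-!
If `c = c' d`, then `θ_{e,c}` is `θ_{e,c'}` followed by multiplication by `d` on `ᵉR`, and a map
whose composite with some other map is pure is itself pure; so purity of `θ_{e,c}` passes to
`θ_{e,c'}`. For `e ≤ E`, `θ_{e,1}` followed by `F^{E-e} : ᵉR → ᴱR` is `θ_{E,1}`, so once `θ_{E,c}`
is pure for all large `E`, every `θ_{e,1}` is pure. Pure maps are injective (tensor with `R`):
injectivity of `θ_{1,1}` is injectivity of Frobenius, whence `R` is reduced, and injectivity of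
`θ_{e,c}`, `r ↦ r^{p^e} c`, makes `c` a nonzerodivisor.
-/

variable {R : Type u} [CommRing R]

namespace IsPureMap

variable {M N P : Type u} [AddCommGroup M] [AddCommGroup N] [AddCommGroup P]
  [Module R M] [Module R N] [Module R P]

theorem of_comp {f : M →ₗ[R] N} (g : N →ₗ[R] P) (h : IsPureMap (g ∘ₗ f)) : IsPureMap f :=
  fun V _ _ => by
    have hV := h V
    rw [LinearMap.lTensor_comp, LinearMap.coe_comp] at hV
    exact hV.of_comp

theorem injective {f : M →ₗ[R] N} (h : IsPureMap f) : Function.Injective f := by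
  intro a b hab
  have h1 : LinearMap.lTensor R f ((1 : R) ⊗ₜ a) = LinearMap.lTensor R f ((1 : R) ⊗ₜ b) := by
    rw [LinearMap.lTensor_tmul, LinearMap.lTensor_tmul, hab]
  simpa using congrArg (TensorProduct.lid R M) (h R h1)

end IsPureMap

theorem isReduced_of_injective_frobenius (p : ℕ) [Fact p.Prime] [CharP R p]
    (h : Function.Injective (frobenius R p)) : IsReduced R where
  eq_zero x := by
    rintro ⟨n, hn⟩
    have hpow : (frobenius R p)^[n] x = (frobenius R p)^[n] 0 := by
      rw [iterate_map_zero, iterate_frobenius]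
      exact pow_eq_zero_of_le (Nat.lt_pow_self (Fact.out : p.Prime).one_lt).le hn
    exact h.iterate n hpow

variable (p : ℕ) [Fact p.Prime] [CharP R p]

namespace FrobTwist

noncomputable def mulRight (e : ℕ) (d : R) : FrobTwist R p e →ₗ[R] FrobTwist R p e where
  toFun x := (show R from x) * d
  map_add' a b := add_mul (show R from a) b d
  map_smul' r x := mul_assoc (iterateFrobenius R p e r) (show R from x) d

/-- The `R`-linear map `ᵉR → ᴱR`, `x ↦ x^{p^{E-e}}`. -/
noncomputable def shift {e E : ℕ} (h : e ≤ E) : FrobTwist R p e →ₗ[R] FrobTwist R p E where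
  toFun x := iterateFrobenius R p (E - e) (show R from x)
  map_add' a b := map_add (iterateFrobenius R p (E - e)) (show R from a) b
  map_smul' r x := by
    show iterateFrobenius R p (E - e) (iterateFrobenius R p e r * (show R from x))
        = iterateFrobenius R p E r * iterateFrobenius R p (E - e) (show R from x)
    rw [map_mul, ← iterateFrobenius_add_apply, Nat.sub_add_cancel h]

end FrobTwist

variable {p}

theorem thetaMap_mul (e : ℕ) (c d : R) :
    thetaMap R p e (c * d) = FrobTwist.mulRight p e d ∘ₗ thetaMap R p e c :=
  LinearMap.ext fun r => (mul_assoc (iterateFrobenius R p e r) c d).symm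

theorem thetaMap_one_eq_shift_comp {e E : ℕ} (h : e ≤ E) :
    thetaMap R p E 1 = FrobTwist.shift p h ∘ₗ thetaMap R p e 1 :=
  LinearMap.ext fun r => by
    show iterateFrobenius R p E r * 1 = iterateFrobenius R p (E - e) (iterateFrobenius R p e r * 1)
    rw [mul_one, mul_one, ← iterateFrobenius_add_apply, Nat.sub_add_cancel h]

theorem isPureMap_thetaMap_of_dvd {e : ℕ} {c c' : R} (hdvd : c' ∣ c)
    (h : IsPureMap (thetaMap R p e c)) : IsPureMap (thetaMap R p e c') := by
  obtain ⟨d, rfl⟩ := hdvd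
  exact IsPureMap.of_comp _ (thetaMap_mul e c' d ▸ h)

theorem isPureMap_thetaMap_one_of_le {e E : ℕ} {c : R} (h : e ≤ E)
    (hE : IsPureMap (thetaMap R p E c)) : IsPureMap (thetaMap R p e 1) := by
  have hE1 := isPureMap_thetaMap_of_dvd (one_dvd c) hE
  rw [thetaMap_one_eq_shift_comp h] at hE1
  exact IsPureMap.of_comp _ hE1

theorem injective_frobenius_of_injective_thetaMap_one
    (h : Function.Injective (thetaMap R p 1 1)) : Function.Injective (frobenius R p) := by
  intro x y hxy
  apply h
  show iterateFrobenius R p 1 x * 1 = iterateFrobenius R p 1 y * 1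
  rwa [mul_one, mul_one, iterateFrobenius_one]

theorem mem_nonZeroDivisors_of_injective_thetaMap {e : ℕ} {c : R}
    (h : Function.Injective (thetaMap R p e c)) : c ∈ nonZeroDivisors R := by
  rw [mem_nonZeroDivisors_iff_right]
  intro x hx
  apply h
  show iterateFrobenius R p e x * c = iterateFrobenius R p e 0 * c
  rw [map_zero, zero_mul, iterateFrobenius_def,
    ← Nat.sub_add_cancel (Nat.one_le_pow e p (Fact.out : p.Prime).pos), pow_succ, mul_assoc, hx,
    mul_zero]

theorem purityExponent_le_of_forall_isPureMap {c : R} {e : ℕ}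
    (h : ∀ e' : ℕ, e ≤ e' → IsPureMap (thetaMap R p e' c)) : purityExponent R p c ≤ e :=
  sInf_le ⟨e, rfl, h⟩

theorem exists_forall_isPureMap_of_purityExponent_ne_top {c : R}
    (h : purityExponent R p c ≠ ⊤) :
    ∃ e : ℕ, ∀ e' : ℕ, e ≤ e' → IsPureMap (thetaMap R p e' c) := by
  by_contra! hnone
  refine h (sInf_eq_top.mpr ?_)
  rintro _ ⟨e, -, he⟩
  obtain ⟨e', he', hnot⟩ := hnone e
  exact absurd (he e' he') hnot

theorem purityExponent_le_of_dvd_general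
    (R : Type u) [CommRing R]
    (p : ℕ) [Fact p.Prime] [CharP R p] (c c' : R) (hdvd : c' ∣ c) :
    purityExponent R p c' ≤ purityExponent R p c ∧
      (c ≠ 0 → purityExponent R p c ≠ ⊤ →
        purityExponent R p (1 : R) = 0 ∧ IsReduced R ∧ c ∈ nonZeroDivisors R) := by
  refine ⟨sInf_le_sInf fun _ ⟨e, he, h⟩ =>
    ⟨e, he, fun e' he' => isPureMap_thetaMap_of_dvd hdvd (h e' he')⟩, fun _ hfin => ?_⟩
  obtain ⟨e₀, hpure⟩ := exists_forall_isPureMap_of_purityExponent_ne_top hfin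
  have hone (e : ℕ) : IsPureMap (thetaMap R p e 1) :=
    isPureMap_thetaMap_one_of_le (le_max_left e e₀) (hpure _ (le_max_right e e₀))
  exact ⟨nonpos_iff_eq_zero.mp (purityExponent_le_of_forall_isPureMap fun e _ => hone e),
    isReduced_of_injective_frobenius p
      (injective_frobenius_of_injective_thetaMap_one (hone 1).injective),
    mem_nonZeroDivisors_of_injective_thetaMap (hpure e₀ le_rfl).injective⟩

theorem purityExponent_le_of_dvd
    (R : Type u) [CommRing R] [IsNoetherianRing R]
    (p : ℕ) [Fact p.Prime] [CharP R p] (c c' : R) (hdvd : c' ∣ c) :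
    purityExponent R p c' ≤ purityExponent R p c ∧
      (c ≠ 0 → purityExponent R p c ≠ ⊤ →
        purityExponent R p (1 : R) = 0 ∧ IsReduced R ∧ c ∈ nonZeroDivisors R) :=
  purityExponent_le_of_dvd_general R p c c' hdvd
end

section
/- Let (R, m, κ) be a Noetherian local ring of prime characteristic p, let E be the injective hull of κ over R, and let v be a socle generator of E. Then for every e ∈ ℕ and c ∈ R, the map θ_{e,c} : R → {}^e R with 1 ↦ {}^e c is pure if and only if the element c · ({}^e 1 ⊗ v) is nonzero in {}^e R ⊗_R E. Consequently, the set 𝒜_e = {r ∈ R : θ_{e,r} is not pure} equals the annihilator in R of {}^e 1 ⊗ v ∈ {}^e R ⊗_R E, and in particular is an ideal of R. -/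
/-!
STATEMENT 16.  `(R, 𝔪, κ)` Noetherian local of prime characteristic `p`, `E`
an injective hull of `κ` (rendered: `E` injective, with an essential embedding
of `κ = R/𝔪`), and `v` a socle generator of `E`.  Then `θ_{e,c}` is pure iff
`c · (ᵉ1 ⊗ v) = ᵉc ⊗ v ≠ 0` in `ᵉR ⊗_R E`; consequently
`𝒜_e = {r : θ_{e,r} not pure}` is the annihilator of `ᵉ1 ⊗ v` (namely
`{r : ᵉr ⊗ v = 0}`), and in particular is an ideal of `R`.
-/

open scoped TensorProduct

universe u

theorem pure_iff_socle_generator_survives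
    (R : Type u) [CommRing R] [IsNoetherianRing R] [IsLocalRing R]
    (p : ℕ) [Fact p.Prime] [CharP R p]
    (E : Type u) [AddCommGroup E] [Module R E] [Module.Injective R E]
    (ι : (R ⧸ IsLocalRing.maximalIdeal R) →ₗ[R] E)
    (hinj : Function.Injective ι)
    (hess : ∀ N : Submodule R E, N ≠ ⊥ → ∃ x ∈ N, x ≠ 0 ∧ x ∈ LinearMap.range ι)
    (v : E) (hv0 : v ≠ 0)
    (hvm : ∀ r ∈ IsLocalRing.maximalIdeal R, r • v = 0)
    (hsoc : ∀ x : E, (∀ r ∈ IsLocalRing.maximalIdeal R, r • x = 0) →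
      x ∈ Submodule.span R {v})
    (e : ℕ) :
    (∀ c : R, IsPureMap (thetaMap R p e c) ↔
      ((show FrobTwist R p e from c) ⊗ₜ[R] v : FrobTwist R p e ⊗[R] E) ≠ 0) ∧
    (∃ I : Ideal R, ∀ r : R, r ∈ I ↔ ¬ IsPureMap (thetaMap R p e r)) := by

  classical
  haveI : Nontrivial (R ⧸ IsLocalRing.maximalIdeal R) :=
    Ideal.Quotient.nontrivial_iff.mpr (Ideal.IsMaximal.ne_top (IsLocalRing.maximalIdeal.isMaximal R))
  have hθ1 : ∀ c : R, thetaMap R p e c 1 = (show FrobTwist R p e from c) := by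
    intro c
    show (iterateFrobenius R p e (1 : R) * c : R) = c
    simp
  -- the socle generator image
  set w : E := ι 1 with hw
  have hw0 : w ≠ 0 := by
    intro h
    exact one_ne_zero (hinj (h.trans (map_zero ι).symm))
  have hsmw : ∀ r ∈ IsLocalRing.maximalIdeal R, r • w = 0 := by
    intro r hr
    rw [hw, ← map_smul]
    have h1 : r • (1 : R ⧸ IsLocalRing.maximalIdeal R) = 0 := by
      have : (1 : R ⧸ IsLocalRing.maximalIdeal R) = Submodule.Quotient.mk (1 : R) := rfl
      rw [this, ← Submodule.Quotient.mk_smul, smul_eq_mul, mul_one]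
      exact (Submodule.Quotient.mk_eq_zero _).mpr hr
    rw [h1, map_zero]
  -- main equivalence
  have main : ∀ c : R, IsPureMap (thetaMap R p e c) ↔
      ((show FrobTwist R p e from c) ⊗ₜ[R] v : FrobTwist R p e ⊗[R] E) ≠ 0 := by
    intro c
    constructor
    · intro hp h0
      have hE := hp E
      have h1 : LinearMap.lTensor E (thetaMap R p e c) (v ⊗ₜ[R] (1 : R)) = 0 := by
        rw [LinearMap.lTensor_tmul, hθ1 c]
        have : (v ⊗ₜ[R] (show FrobTwist R p e from c) : E ⊗[R] FrobTwist R p e)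
            = (TensorProduct.comm R (FrobTwist R p e) E)
              ((show FrobTwist R p e from c) ⊗ₜ[R] v) := by
          rw [TensorProduct.comm_tmul]
        rw [this, h0, map_zero]
      have h2 : (v ⊗ₜ[R] (1 : R) : E ⊗[R] R) = 0 :=
        hE (h1.trans (map_zero _).symm)
      exact hv0 (by simpa using congrArg (TensorProduct.rid R E) h2)
    · intro hne V _ _
      rw [injective_iff_map_eq_zero]
      intro t ht
      set x := (TensorProduct.rid R V) t with hx
      have ht' : t = x ⊗ₜ[R] (1 : R) := by
        rw [hx, ← TensorProduct.rid_symm_apply, LinearEquiv.symm_apply_apply]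
      by_cases hx0 : x = 0
      · rw [ht', hx0, TensorProduct.zero_tmul]
      exfalso
      have htens : (x ⊗ₜ[R] (show FrobTwist R p e from c) : V ⊗[R] FrobTwist R p e) = 0 := by
        rw [ht', LinearMap.lTensor_tmul, hθ1 c] at ht
        exact ht
      -- build a linear functional V → E sending x to w
      set Tx : R →ₗ[R] V := LinearMap.toSpanSingleton R V x with hTx
      have hTx1 : Tx 1 = x := one_smul R x
      have hker : LinearMap.ker Tx ≤ IsLocalRing.maximalIdeal R := by
        apply IsLocalRing.le_maximalIdeal
        intro h
        have h1 : (1 : R) ∈ LinearMap.ker Tx := h ▸ Submodule.mem_top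
        rw [LinearMap.mem_ker, hTx1] at h1
        exact hx0 h1
      have hle : LinearMap.ker Tx ≤ LinearMap.ker (LinearMap.toSpanSingleton R E w) := by
        intro r hr
        rw [LinearMap.mem_ker, LinearMap.toSpanSingleton_apply]
        exact hsmw r (hker hr)
      set g0 : (R ⧸ LinearMap.ker Tx) →ₗ[R] E :=
        Submodule.liftQ _ (LinearMap.toSpanSingleton R E w) hle with hg0
      set g : LinearMap.range Tx →ₗ[R] E :=
        g0 ∘ₗ (Tx.quotKerEquivRange.symm : LinearMap.range Tx →ₗ[R] R ⧸ LinearMap.ker Tx)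
        with hg
      obtain ⟨φ, hφ⟩ := Module.Injective.out (LinearMap.range Tx).subtype
        (Submodule.injective_subtype _) g
      have hxmem : x ∈ LinearMap.range Tx := ⟨1, hTx1⟩
      have hφx : φ x = w := by
        have h1 : Tx.quotKerEquivRange (Submodule.Quotient.mk (1 : R)) = ⟨x, hxmem⟩ := by
          apply Subtype.ext
          rw [LinearMap.quotKerEquivRange_apply_mk]
          exact hTx1
        have h2 : Tx.quotKerEquivRange.symm ⟨x, hxmem⟩ = Submodule.Quotient.mk (1 : R) := by
          rw [← h1, LinearEquiv.symm_apply_apply]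
        have h3 := hφ ⟨x, hxmem⟩
        rw [Submodule.subtype_apply] at h3
        rw [h3, hg, LinearMap.comp_apply, LinearEquiv.coe_coe, h2, hg0,
          Submodule.liftQ_apply, LinearMap.toSpanSingleton_apply, one_smul]
      have hwc : (w ⊗ₜ[R] (show FrobTwist R p e from c) : E ⊗[R] FrobTwist R p e) = 0 := by
        have := congrArg (LinearMap.rTensor (FrobTwist R p e) φ) htens
        rw [LinearMap.rTensor_tmul, map_zero, hφx] at this
        exact this
      obtain ⟨s, hs⟩ := Submodule.mem_span_singleton.mp (hsoc w hsmw)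
      have hsu : IsUnit s := by
        rw [← IsLocalRing.notMem_maximalIdeal]
        intro hsm
        exact hw0 (hs ▸ hvm s hsm)
      rw [← hs, ← TensorProduct.smul_tmul'] at hwc
      have hvc : (v ⊗ₜ[R] (show FrobTwist R p e from c) : E ⊗[R] FrobTwist R p e) = 0 :=
        hsu.smul_eq_zero.mp hwc
      apply hne
      have : ((show FrobTwist R p e from c) ⊗ₜ[R] v : FrobTwist R p e ⊗[R] E)
          = (TensorProduct.comm R E (FrobTwist R p e))
            (v ⊗ₜ[R] (show FrobTwist R p e from c)) := by
        rw [TensorProduct.comm_tmul]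
      rw [this, hvc, map_zero]
  refine ⟨main, ?_⟩
  refine ⟨{ carrier := {r : R | ((show FrobTwist R p e from r) ⊗ₜ[R] v :
      FrobTwist R p e ⊗[R] E) = 0}
            add_mem' := ?_
            zero_mem' := ?_
            smul_mem' := ?_ }, ?_⟩
  · intro a b ha hb
    have hab : (show FrobTwist R p e from a + b)
        = (show FrobTwist R p e from a) + (show FrobTwist R p e from b) := rfl
    show ((show FrobTwist R p e from a + b) ⊗ₜ[R] v : FrobTwist R p e ⊗[R] E) = 0
    have ha' : ((show FrobTwist R p e from a) ⊗ₜ[R] v : FrobTwist R p e ⊗[R] E) = 0 := ha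
    have hb' : ((show FrobTwist R p e from b) ⊗ₜ[R] v : FrobTwist R p e ⊗[R] E) = 0 := hb
    rw [hab, TensorProduct.add_tmul, ha', hb', add_zero]
  · show ((show FrobTwist R p e from (0 : R)) ⊗ₜ[R] v : FrobTwist R p e ⊗[R] E) = 0
    have : (show FrobTwist R p e from (0 : R)) = (0 : FrobTwist R p e) := rfl
    rw [this, TensorProduct.zero_tmul]
  · intro s r hr
    show ((show FrobTwist R p e from s • r) ⊗ₜ[R] v : FrobTwist R p e ⊗[R] E) = 0
    let L : FrobTwist R p e →ₗ[R] FrobTwist R p e :=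
      { toFun := fun x => (show FrobTwist R p e from s * (show R from x))
        map_add' := fun a b => mul_add s (show R from a) (show R from b)
        map_smul' := fun t x => by
          show s * (iterateFrobenius R p e t * (show R from x))
            = iterateFrobenius R p e t * (s * (show R from x))
          ring }
    have h1 : ((show FrobTwist R p e from s • r) ⊗ₜ[R] v : FrobTwist R p e ⊗[R] E)
        = LinearMap.rTensor E L ((show FrobTwist R p e from r) ⊗ₜ[R] v) := by
      rw [LinearMap.rTensor_tmul]
      rfl
    have hr' : ((show FrobTwist R p e from r) ⊗ₜ[R] v : FrobTwist R p e ⊗[R] E) = 0 := hr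
    rw [h1, hr', map_zero]
  · intro r
    constructor
    · intro hmem hp
      exact (main r).mp hp hmem
    · intro hnp
      by_contra hne
      exact hnp ((main r).mpr hne)
end

section
/- Let φ : R → S be a faithfully flat homomorphism of Noetherian rings of prime characteristic p and c ∈ R. Then the purity exponent satisfies 𝔢_c ≤ 𝔢_{φ(c)}, i.e., if the map S → {}^e S sending 1 to {}^e φ(c) is pure over S for all e' ≥ e, then R → {}^e R sending 1 to {}^e c is pure over R for all e' ≥ e. -/
/-!
STATEMENT 17.  `φ : R → S` a faithfully flat homomorphism of Noetherian rings
of prime characteristic `p`, `c ∈ R`.  Then `𝔢_c ≤ 𝔢_{φ c}`; equivalently, if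
`θ_{e',φ c}` is pure over `S` for all `e' ≥ e`, then `θ_{e',c}` is pure over
`R` for all `e' ≥ e`.
-/

open scoped TensorProduct

universe u

/-- identity cast into the Frobenius twist -/
def twF (S : Type u) (p e : ℕ) : S → FrobTwist S p e := id
/-- identity cast out of the Frobenius twist -/
def untwF (S : Type u) (p e : ℕ) : FrobTwist S p e → S := id

lemma twF_mul (S : Type u) [CommRing S] (p e : ℕ) (a b : S) :
    twF S p e (a * b) = twF S p e a * twF S p e b := rfl

section Aux
variable (R S : Type u) [CommRing R] [CommRing S]

/-- purity of the unit for a faithfully flat algebra -/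
lemma aux_unit_pure [Algebra R S] [Module.FaithfullyFlat R S]
    (V : Type u) [AddCommGroup V] [Module R V] (v : V)
    (hv : v ⊗ₜ[R] (1 : S) = 0) : v = 0 := by
  have hz : LinearMap.lTensor S (LinearMap.toSpanSingleton R V v) = 0 := by
    apply TensorProduct.ext'
    intro s r
    have h1 : (1 : S) ⊗ₜ[R] v = (0 : S ⊗[R] V) := by
      have := congrArg (TensorProduct.comm R V S) hv
      simpa using this
    calc LinearMap.lTensor S (LinearMap.toSpanSingleton R V v) (s ⊗ₜ r)
        = s ⊗ₜ (r • v) := rfl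
      _ = (r • s) ⊗ₜ v := (TensorProduct.smul_tmul r s v).symm
      _ = ((r • s) • ((1:S) ⊗ₜ[R] v)) := by rw [TensorProduct.smul_tmul', smul_eq_mul, mul_one]
      _ = 0 := by rw [h1, smul_zero]
  have := (Module.FaithfullyFlat.zero_iff_lTensor_zero R S
    (LinearMap.toSpanSingleton R V v)).mpr hz
  have hv0 : LinearMap.toSpanSingleton R V v 1 = 0 := by rw [this]; rfl
  simpa using hv0

variable (p : ℕ) [Fact p.Prime] [CharP R p] [CharP S p] (φ : R →+* S)

lemma aux_theta_pure
    (hff : letI : Module R S := Module.compHom S φ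
           Module.FaithfullyFlat R S)
    (c : R) (e : ℕ)
    (hS : IsPureMap (thetaMap S p e (φ c))) :
    IsPureMap (thetaMap R p e c) := by
  letI : Algebra R S := φ.toAlgebra
  haveI hff' : Module.FaithfullyFlat R S := hff
  -- the ring hom R →+* ᵉS
  letI ψ : R →+* FrobTwist S p e := (iterateFrobenius S p e).comp φ
  letI instM : Module R (FrobTwist S p e) := Module.compHom (FrobTwist S p e) ψ
  haveI instT : IsScalarTower R S (FrobTwist S p e) := ⟨fun r s x => by
    show twF S p e (iterateFrobenius S p e (φ r * s)) * x
       = twF S p e (iterateFrobenius S p e (φ r)) * (twF S p e (iterateFrobenius S p e s) * x)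
    rw [map_mul, twF_mul, mul_assoc]⟩
  haveI instT2 : IsScalarTower S S (FrobTwist S p e) := ⟨fun s t x => by
    show twF S p e (iterateFrobenius S p e (s * t)) * x
       = twF S p e (iterateFrobenius S p e s) * (twF S p e (iterateFrobenius S p e t) * x)
    rw [map_mul, twF_mul, mul_assoc]⟩
  haveI instC : SMulCommClass S S (FrobTwist S p e) := ⟨fun s t x => by
    show twF S p e (iterateFrobenius S p e s) * (twF S p e (iterateFrobenius S p e t) * x)
       = twF S p e (iterateFrobenius S p e t) * (twF S p e (iterateFrobenius S p e s) * x)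
    ring⟩
  intro V _ _
  -- the three maps
  set f : R →ₗ[R] S := Algebra.linearMap R S with hf
  set g : S →ₗ[R] FrobTwist S p e :=
    { toFun := fun s => twF S p e (iterateFrobenius S p e s * φ c)
      map_add' := fun a b => by
        show twF S p e (iterateFrobenius S p e (a + b) * φ c)
           = twF S p e (iterateFrobenius S p e a * φ c) + twF S p e (iterateFrobenius S p e b * φ c)
        rw [map_add, add_mul]; rfl
      map_smul' := fun r s => by
        show twF S p e (iterateFrobenius S p e (φ r * s) * φ c)
           = twF S p e (iterateFrobenius S p e (φ r)) * twF S p e (iterateFrobenius S p e s * φ c)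
        rw [map_mul, mul_assoc, twF_mul] } with hg
  set h : FrobTwist R p e →ₗ[R] FrobTwist S p e :=
    { toFun := fun x => twF S p e (φ (untwF R p e x))
      map_add' := fun a b => by
        show twF S p e (φ (untwF R p e a + untwF R p e b)) = _
        rw [map_add]; rfl
      map_smul' := fun r x => by
        show twF S p e (φ (iterateFrobenius R p e r * untwF R p e x))
           = twF S p e (iterateFrobenius S p e (φ r)) * twF S p e (φ (untwF R p e x))
        rw [map_mul, ← twF_mul, iterateFrobenius_def, iterateFrobenius_def, map_pow] } with hh
  have hcomp : g ∘ₗ f = h ∘ₗ thetaMap R p e c := by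
    apply LinearMap.ext; intro r
    show twF S p e (iterateFrobenius S p e (φ r) * φ c)
       = twF S p e (φ (iterateFrobenius R p e r * c))
    rw [map_mul, iterateFrobenius_def, iterateFrobenius_def, map_pow]
  -- injectivity of lTensor V f
  have hfinj : Function.Injective (LinearMap.lTensor V f) := by
    have hform : ∀ z : V ⊗[R] R,
        LinearMap.lTensor V f z = (TensorProduct.rid R V z) ⊗ₜ[R] (1 : S) := by
      have heq : LinearMap.lTensor V f =
          ((TensorProduct.mk R V S).flip 1) ∘ₗ (TensorProduct.rid R V).toLinearMap := by
        apply TensorProduct.ext'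
        intro v r
        show v ⊗ₜ[R] (algebraMap R S r) = (r • v) ⊗ₜ[R] (1 : S)
        rw [TensorProduct.smul_tmul, Algebra.smul_def, mul_one]
      intro z; rw [heq]; rfl
    intro z₁ z₂ hz
    rw [hform z₁, hform z₂] at hz
    have hsub : (TensorProduct.rid R V z₁ - TensorProduct.rid R V z₂) ⊗ₜ[R] (1 : S) = 0 := by
      rw [TensorProduct.sub_tmul, hz, sub_self]
    have := sub_eq_zero.mp (aux_unit_pure R S V _ hsub)
    exact (TensorProduct.rid R V).injective this
  -- injectivity of lTensor V g
  have hginj : Function.Injective (LinearMap.lTensor V g) := by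
    set W : Type u := S ⊗[R] V with hW
    have hWinj := hS W
    letI E1 : V ⊗[R] S ≃ₗ[R] S ⊗[R] V := TensorProduct.comm R V S
    letI E2 : W ≃ₗ[S] W ⊗[S] S := (TensorProduct.rid S W).symm
    letI E3 : W ⊗[S] (FrobTwist S p e) ≃ₗ[S] (FrobTwist S p e) ⊗[S] W :=
      TensorProduct.comm S W (FrobTwist S p e)
    letI E4 : (FrobTwist S p e) ⊗[S] (S ⊗[R] V) ≃ₗ[S] (FrobTwist S p e) ⊗[R] V :=
      TensorProduct.AlgebraTensorModule.cancelBaseChange R S S (FrobTwist S p e) V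
    letI E5 : (FrobTwist S p e) ⊗[R] V ≃ₗ[R] V ⊗[R] (FrobTwist S p e) :=
      TensorProduct.comm R (FrobTwist S p e) V
    have key : ∀ x : V ⊗[R] S,
        LinearMap.lTensor V g x =
          E5 (E4 (E3 (LinearMap.lTensor W (thetaMap S p e (φ c)) (E2 (E1 x))))) := by
      intro x
      induction x using TensorProduct.induction_on with
      | zero => simp
      | tmul v s =>
        have h1 : E2 (E1 (v ⊗ₜ s)) = (s ⊗ₜ[R] v) ⊗ₜ[S] (1 : S) := rfl
        rw [h1]
        have h2 : LinearMap.lTensor W (thetaMap S p e (φ c)) ((s ⊗ₜ[R] v) ⊗ₜ[S] (1 : S))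
            = (s ⊗ₜ[R] v) ⊗ₜ[S] (twF S p e (φ c)) := by
          have hθ : thetaMap S p e (φ c) 1 = twF S p e (φ c) := by
            show twF S p e (iterateFrobenius S p e 1 * φ c) = twF S p e (φ c)
            rw [map_one, one_mul]
          rw [LinearMap.lTensor_tmul, hθ]
        rw [h2]
        have h3 : E3 ((s ⊗ₜ[R] v) ⊗ₜ[S] (twF S p e (φ c)))
            = (twF S p e (φ c)) ⊗ₜ[S] (s ⊗ₜ[R] v) := rfl
        rw [h3]
        have h4 : E4 ((twF S p e (φ c)) ⊗ₜ[S] (s ⊗ₜ[R] v))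
            = (s • (twF S p e (φ c))) ⊗ₜ[R] v :=
          TensorProduct.AlgebraTensorModule.cancelBaseChange_tmul R S S _ _ _
        rw [h4]
        rfl
      | add a b ha hb =>
        simp only [map_add, ha, hb]
    intro z₁ z₂ hz
    rw [key z₁, key z₂] at hz
    have s5 := E5.injective hz
    have s4 := E4.injective s5
    have s3 := E3.injective s4
    have s2 := hWinj s3
    have s1 := E2.injective s2
    exact E1.injective s1
  -- conclude
  intro z₁ z₂ hz
  have hcompT : (LinearMap.lTensor V g) ∘ₗ (LinearMap.lTensor V f)
      = (LinearMap.lTensor V h) ∘ₗ (LinearMap.lTensor V (thetaMap R p e c)) := by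
    rw [← LinearMap.lTensor_comp, ← LinearMap.lTensor_comp, hcomp]
  have h1 := LinearMap.congr_fun hcompT z₁
  have h2 := LinearMap.congr_fun hcompT z₂
  simp only [LinearMap.comp_apply] at h1 h2
  apply hfinj
  apply hginj
  rw [h1, h2, hz]

end Aux

theorem purityExponent_le_of_faithfullyFlat
    (R S : Type u) [CommRing R] [CommRing S]
    [IsNoetherianRing R] [IsNoetherianRing S]
    (p : ℕ) [Fact p.Prime] [CharP R p] [CharP S p]
    (φ : R →+* S)
    (hff : letI : Module R S := Module.compHom S φ
           Module.FaithfullyFlat R S)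
    (c : R) :
    purityExponent R p c ≤ purityExponent S p (φ c) ∧
      ∀ e : ℕ, (∀ e' : ℕ, e ≤ e' → IsPureMap (thetaMap S p e' (φ c))) →
        ∀ e' : ℕ, e ≤ e' → IsPureMap (thetaMap R p e' c) := by
  have key : ∀ e : ℕ, (∀ e' : ℕ, e ≤ e' → IsPureMap (thetaMap S p e' (φ c))) →
      ∀ e' : ℕ, e ≤ e' → IsPureMap (thetaMap R p e' c) := by
    intro e hSe e' he'
    exact aux_theta_pure R S p φ hff c e' (hSe e' he')
  refine ⟨?_, key⟩
  apply sInf_le_sInf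
  rintro n ⟨e, rfl, hpure⟩
  exact ⟨e, rfl, key e hpure⟩
end

section
/- Let R be a Noetherian ring of prime characteristic p, c ∈ R with finite purity exponent 𝔢_c, M an R-module, N ⊆ M a submodule, u ∈ M, and e ≥ 𝔢_c an integer. Then u ∈ N if and only if c · u^{p^e}_M ∈ N^{[p^e]}_M, where u^{p^e}_M = 1 ⊗ u ∈ {}^e R ⊗_R M and N^{[p^e]}_M is the image of {}^e R ⊗_R N in {}^e R ⊗_R M. -/
/-!
STATEMENT 18.  `R` Noetherian of prime characteristic `p`, `c` with finite
purity exponent `𝔢_c`, `M` an `R`-module, `N ⊆ M`, `u ∈ M`, `e ≥ 𝔢_c`.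
Then `u ∈ N` iff `c · u^{pᵉ}_M ∈ N^{[pᵉ]}_M`, where `u^{pᵉ}_M = 1 ⊗ u` and
`c · u^{pᵉ}_M = ᵉc ⊗ u` in `ᵉR ⊗_R M` (the action through the left factor),
and `N^{[pᵉ]}_M` is the image of `ᵉR ⊗_R N` in `ᵉR ⊗_R M`.
-/

open scoped TensorProduct

universe u

/-!
Tensoring `0 → N → M → M ⧸ N → 0` with `ᵉR` is right exact, so `ᵉc ⊗ u` lies in `N^{[pᵉ]}_M`
exactly when `ᵉc ⊗ ū = 0` in `ᵉR ⊗ (M ⧸ N)`. That element is the image of `1 ⊗ ū` under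
`θ_{e,c} ⊗ (M ⧸ N)`, which is injective since `θ_{e,c}` is pure for `e ≥ 𝔢_c`; hence `ū = 0`.
-/

open TensorProduct LinearMap

section

variable {R : Type u} [CommRing R] {F M : Type u} [AddCommGroup F] [Module R F]
  [AddCommGroup M] [Module R M]

theorem IsPureMap.rTensor_injective {f : M →ₗ[R] F} (hf : IsPureMap f)
    (V : Type u) [AddCommGroup V] [Module R V] : Function.Injective (f.rTensor V) := by
  rw [← comm_comp_lTensor_comp_comm_eq]
  exact (TensorProduct.comm R V F).injective.comp
    ((hf V).comp (TensorProduct.comm R M V).injective)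

theorem IsPureMap.apply_one_tmul_eq_zero_iff {f : R →ₗ[R] F} (hf : IsPureMap f)
    {V : Type u} [AddCommGroup V] [Module R V] (v : V) :
    f 1 ⊗ₜ[R] v = 0 ↔ v = 0 := by
  rw [← rTensor_tmul, LinearMap.map_eq_zero_iff _ (hf.rTensor_injective V),
    ← LinearEquiv.map_eq_zero_iff (TensorProduct.lid R V), lid_tmul, one_smul]

theorem tmul_mem_range_lTensor_subtype_iff (N : Submodule R M) (x : F) (u : M) :
    x ⊗ₜ[R] u ∈ range (N.subtype.lTensor F) ↔ x ⊗ₜ[R] N.mkQ u = 0 := by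
  rw [← lTensor_mkQ, mem_ker, lTensor_tmul]

end

section Frobenius

variable (R : Type u) [CommRing R] (p : ℕ) [Fact p.Prime] [CharP R p]

theorem thetaMap_apply_one (e : ℕ) (c : R) :
    thetaMap R p e c 1 = (show FrobTwist R p e from c) :=
  show iterateFrobenius R p e 1 * c = c by rw [map_one, one_mul]

theorem isPureMap_thetaMap_of_purityExponent_le {c : R} {e : ℕ}
    (he : purityExponent R p c ≤ e) : IsPureMap (thetaMap R p e c) := by
  rw [purityExponent] at he
  obtain ⟨a, ha, -⟩ := sInf_lt_iff.mp (he.trans_lt (ENat.natCast_lt_top e))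
  obtain ⟨e₀, he₀, hpure⟩ := csInf_mem ⟨a, ha⟩
  rw [he₀, Nat.cast_le] at he
  exact hpure e he

end Frobenius

theorem mem_iff_frobenius_power_mem_general
    (R : Type u) [CommRing R]
    (p : ℕ) [Fact p.Prime] [CharP R p] (c : R)
    (M : Type u) [AddCommGroup M] [Module R M]
    (N : Submodule R M) (u : M) (e : ℕ)
    (he : purityExponent R p c ≤ (e : ℕ∞)) :
    u ∈ N ↔
      ((show FrobTwist R p e from c) ⊗ₜ[R] u : FrobTwist R p e ⊗[R] M) ∈
        LinearMap.range (LinearMap.lTensor (FrobTwist R p e) N.subtype) := by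
  rw [tmul_mem_range_lTensor_subtype_iff, ← thetaMap_apply_one R p e c,
    (isPureMap_thetaMap_of_purityExponent_le R p he).apply_one_tmul_eq_zero_iff,
    Submodule.mkQ_apply, Submodule.Quotient.mk_eq_zero]

theorem mem_iff_frobenius_power_mem
    (R : Type u) [CommRing R] [IsNoetherianRing R]
    (p : ℕ) [Fact p.Prime] [CharP R p] (c : R)
    (hfin : purityExponent R p c ≠ ⊤)
    (M : Type u) [AddCommGroup M] [Module R M]
    (N : Submodule R M) (u : M) (e : ℕ)
    (he : purityExponent R p c ≤ (e : ℕ∞)) :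
    u ∈ N ↔
      ((show FrobTwist R p e from c) ⊗ₜ[R] u : FrobTwist R p e ⊗[R] M) ∈
        LinearMap.range (LinearMap.lTensor (FrobTwist R p e) N.subtype) :=
  mem_iff_frobenius_power_mem_general R p c M N u e he
end

section
/- Let R be a Noetherian ring, I an ideal of R, M an R-module in which every element is killed by a power of I, and g, g' ∈ R with g ≡ g' mod I. Then the localizations M_g and M_{g'} are isomorphic as R-modules; indeed g' acts invertibly on M_g and g acts invertibly on M_{g'}. -/
/-!
On `M_g` the element `g` acts invertibly, and `g - g' ∈ I` acts locally nilpotently because every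
element of `M_g` is killed by a power of `I`. A unit minus a locally nilpotent operator is
invertible: from `a ^ n - b ^ n = (a - b) * c` and `b ^ n • x = 0` one gets `a ^ n • x` in the
image of `a - b`. Hence `g'` acts invertibly on `M_g`, symmetrically `g` on `M_{g'}`, and the
universal properties of the two localizations give mutually inverse maps.
-/

universe u v

section ModuleEnd

variable {R : Type*} [CommRing R] {N : Type*} [AddCommGroup N] [Module R N]

theorem isUnit_algebraMap_end_iff_bijective (a : R) :
    IsUnit (algebraMap R (Module.End R N) a) ↔ Function.Bijective (fun x : N => a • x) :=
  Module.End.isUnit_iff _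

theorem isUnit_algebraMap_end_sub_of_forall_pow_smul_eq_zero {a b : R}
    (ha : IsUnit (algebraMap R (Module.End R N) a)) (hb : ∀ x : N, ∃ n : ℕ, b ^ n • x = 0) :
    IsUnit (algebraMap R (Module.End R N) (a - b)) := by
  have hpow (n : ℕ) : Function.Bijective (fun x : N => a ^ n • x) :=
    (isUnit_algebraMap_end_iff_bijective _).mp (by rw [map_pow]; exact ha.pow n)
  rw [isUnit_algebraMap_end_iff_bijective]
  refine ⟨fun x y hxy => ?_, fun y => ?_⟩
  · obtain ⟨n, hn⟩ := hb (x - y)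
    obtain ⟨c, hc⟩ := sub_dvd_pow_sub_pow a b n
    have hxy' : a ^ n • (x - y) = a ^ n • 0 := by
      calc a ^ n • (x - y) = (a ^ n - b ^ n) • (x - y) := by rw [sub_smul, hn, sub_zero]
        _ = c • ((a - b) • x - (a - b) • y) := by rw [hc, mul_comm, mul_smul, smul_sub]
        _ = a ^ n • 0 := by rw [show (a - b) • x = (a - b) • y from hxy, sub_self, smul_zero,
            smul_zero]
    exact sub_eq_zero.mp ((hpow n).injective hxy')
  · obtain ⟨n, hn⟩ := hb y
    obtain ⟨z, rfl⟩ := (hpow n).surjective y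
    obtain ⟨c, hc⟩ := sub_dvd_pow_sub_pow a b n
    have hz : b ^ n • z = 0 :=
      (hpow n).injective (by simp only [smul_comm (a ^ n), hn, smul_zero])
    refine ⟨c • z, ?_⟩
    calc (a - b) • c • z = (a ^ n - b ^ n) • z := by rw [← mul_smul, ← hc]
      _ = a ^ n • z := by rw [sub_smul, hz, sub_zero]

theorem isUnit_algebraMap_end_of_sub_mem (I : Ideal R)
    (hN : ∀ x : N, ∃ n : ℕ, ∀ c ∈ I ^ n, c • x = 0) {a b : R}
    (ha : IsUnit (algebraMap R (Module.End R N) a)) (hab : a - b ∈ I) :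
    IsUnit (algebraMap R (Module.End R N) b) := by
  have hnil (x : N) : ∃ n : ℕ, (a - b) ^ n • x = 0 := by
    obtain ⟨n, hn⟩ := hN x
    exact ⟨n, hn _ (Ideal.pow_mem_pow hab n)⟩
  simpa using isUnit_algebraMap_end_sub_of_forall_pow_smul_eq_zero ha hnil

theorem isUnit_algebraMap_end_of_mem_powers {a : R}
    (ha : IsUnit (algebraMap R (Module.End R N) a)) (s : Submonoid.powers a) :
    IsUnit (algebraMap R (Module.End R N) s) := by
  obtain ⟨_, n, rfl⟩ := s
  simpa using ha.pow n

end ModuleEnd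

namespace LocalizedModule

variable {R : Type*} [CommRing R] {M : Type*} [AddCommGroup M] [Module R M]

theorem exists_forall_ideal_pow_smul_eq_zero (S : Submonoid R) (I : Ideal R)
    (hM : ∀ x : M, ∃ n : ℕ, ∀ c ∈ I ^ n, c • x = 0) (y : LocalizedModule S M) :
    ∃ n : ℕ, ∀ c ∈ I ^ n, c • y = 0 := by
  induction y using LocalizedModule.induction_on with
  | h m s =>
    obtain ⟨n, hn⟩ := hM m
    exact ⟨n, fun c hc => by rw [smul'_mk, hn c hc, zero_mk]⟩

noncomputable def linearEquivOfIsUnit (S T : Submonoid R)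
    (hS : ∀ s : S, IsUnit (algebraMap R (Module.End R (LocalizedModule T M)) s))
    (hT : ∀ t : T, IsUnit (algebraMap R (Module.End R (LocalizedModule S M)) t)) :
    LocalizedModule S M ≃ₗ[R] LocalizedModule T M :=
  LinearEquiv.ofLinearMap
    (IsLocalizedModule.lift S (mkLinearMap S M) (mkLinearMap T M) hS)
    (IsLocalizedModule.lift T (mkLinearMap T M) (mkLinearMap S M) hT)
    (IsLocalizedModule.ext T (mkLinearMap T M) (IsLocalizedModule.map_units (mkLinearMap T M))
      (by rw [LinearMap.comp_assoc, IsLocalizedModule.lift_comp, IsLocalizedModule.lift_comp,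
        LinearMap.id_comp]))
    (IsLocalizedModule.ext S (mkLinearMap S M) (IsLocalizedModule.map_units (mkLinearMap S M))
      (by rw [LinearMap.comp_assoc, IsLocalizedModule.lift_comp, IsLocalizedModule.lift_comp,
        LinearMap.id_comp]))

theorem isUnit_algebraMap_end_powers_of_sub_mem (I : Ideal R)
    (hM : ∀ x : M, ∃ n : ℕ, ∀ c ∈ I ^ n, c • x = 0) {g g' : R} (hcong : g - g' ∈ I) :
    IsUnit (algebraMap R (Module.End R (LocalizedModule (Submonoid.powers g) M)) g') :=
  isUnit_algebraMap_end_of_sub_mem I (exists_forall_ideal_pow_smul_eq_zero _ I hM)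
    (IsLocalizedModule.Away.isUnit_algebraMap (mkLinearMap (Submonoid.powers g) M) g) hcong

end LocalizedModule

theorem localization_invariance_mod_I_general
    {R : Type u} [CommRing R] (I : Ideal R)
    (M : Type v) [AddCommGroup M] [Module R M]
    (htor : ∀ x : M, ∃ n : ℕ, ∀ a ∈ I ^ n, a • x = 0)
    (g g' : R) (hcong : g - g' ∈ I) :
    Function.Bijective (fun x : LocalizedModule (Submonoid.powers g) M => g' • x) ∧
    Function.Bijective (fun x : LocalizedModule (Submonoid.powers g') M => g • x) ∧
    Nonempty (LocalizedModule (Submonoid.powers g) M ≃ₗ[R]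
      LocalizedModule (Submonoid.powers g') M) := by
  have hg' := LocalizedModule.isUnit_algebraMap_end_powers_of_sub_mem I htor hcong
  have hg := LocalizedModule.isUnit_algebraMap_end_powers_of_sub_mem I htor
    (show g' - g ∈ I by rw [← neg_sub]; exact I.neg_mem hcong)
  exact ⟨(isUnit_algebraMap_end_iff_bijective g').mp hg',
    (isUnit_algebraMap_end_iff_bijective g).mp hg,
    ⟨LocalizedModule.linearEquivOfIsUnit _ _
      (isUnit_algebraMap_end_of_mem_powers hg)
      (isUnit_algebraMap_end_of_mem_powers hg')⟩⟩

theorem localization_invariance_mod_I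
    {R : Type u} [CommRing R] [IsNoetherianRing R] (I : Ideal R)
    (M : Type v) [AddCommGroup M] [Module R M]
    (htor : ∀ x : M, ∃ n : ℕ, ∀ a ∈ I ^ n, a • x = 0)
    (g g' : R) (hcong : g - g' ∈ I) :
    Function.Bijective (fun x : LocalizedModule (Submonoid.powers g) M => g' • x) ∧
    Function.Bijective (fun x : LocalizedModule (Submonoid.powers g') M => g • x) ∧
    Nonempty (LocalizedModule (Submonoid.powers g) M ≃ₗ[R]
      LocalizedModule (Submonoid.powers g') M) :=
  localization_invariance_mod_I_general I M htor g g' hcong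
end
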